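/- arXiv:1310.8401 — 9 statements merged into one kernel-verified Lean document; each statement's English description precedes it below -/
import Mathlib

section
/- If N is a normal subgroup of a finite group G, then k(G) ≤ k(G/N)·k(N), where k(·) denotes the number of conjugacy classes; moreover, equality holds if and only if C_{G/N}(gN) = C_G(g)N/N for every g ∈ G. -/
/-!
Counting commuting pairs gives `k(G)|G| = ∑ₓ |C_G(x)|`, and
`|C_G(x)| = |N ∩ C_G(x)| · |C_G(x)N/N| ≤ |N ∩ C_G(x)| · |C_{G/N}(xN)|`.
Grouping the `x` by cosets and double counting, `∑_{x ∈ gN} |N ∩ C_G(x)| = ∑_{n ∈ N} |gN ∩ C_G(n)|`,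
where `gN ∩ C_G(n)` is empty or a coset of `N ∩ C_G(n) = C_N(n)`; so each coset contributes at most
`k(N)|N|`, and `k(G)|G| ≤ k(G/N)|G/N| · k(N)|N|`. Equality forces `C_G(x)N/N = C_{G/N}(xN)` for all
`x`; conversely, this condition at `n ∈ N` reads `C_G(n)N = G`, so every coset meets `C_G(n)` and the
second estimate is sharp as well.
-/

open Subgroup

section

variable {G : Type*} [Group G]

theorem card_eq_card_inf_ker_mul_card_map {G' : Type*} [Group G'] (f : G →* G') (K : Subgroup G) :
    Nat.card K = Nat.card ↥(f.ker ⊓ K) * Nat.card (K.map f) := by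
  rw [← relIndex_bot_left K, ← relIndex_mul_relIndex ⊥ (f.ker ⊓ K) K bot_le inf_le_right,
    relIndex_bot_left, inf_relIndex_right, relIndex_ker]

theorem card_centralizer_eq_card_inf_centralizer (H : Subgroup G) (h : H) :
    Nat.card (centralizer {h}) = Nat.card ↥(H ⊓ centralizer {(h : G)}) :=
  Nat.card_congr <| (Equiv.subtypeEquivRight fun m => by
      simp only [mem_centralizer_singleton_iff, Subtype.ext_iff, coe_mul]).trans
    (Equiv.subtypeSubtypeEquivSubtypeInter (· ∈ H) (· ∈ centralizer {(h : G)}))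

theorem card_inf_centralizer (H : Subgroup G) (x : G) :
    Nat.card ↥(H ⊓ centralizer {x}) = Nat.card {n : H // x ∈ centralizer {(n : G)}} :=
  Nat.card_congr <| (Equiv.subtypeEquivRight fun g => by
      simp only [mem_inf, mem_centralizer_singleton_iff, eq_comm (a := g * x)]).trans
    (Equiv.subtypeSubtypeEquivSubtypeInter (· ∈ H) (x ∈ centralizer {·})).symm

theorem sum_card_centralizer (G : Type*) [Group G] [Fintype G] :
    ∑ x : G, Nat.card (centralizer {x}) = Nat.card (ConjClasses G) * Nat.card G := by
  rw [← card_comm_eq_card_conjClasses_mul_card,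
    Nat.card_congr (Equiv.subtypeProdEquivSigmaSubtype Commute), Nat.card_sigma]
  refine Finset.sum_congr rfl fun x _ => Nat.card_congr <| Equiv.subtypeEquivRight fun y => ?_
  rw [mem_centralizer_singleton_iff]
  exact eq_comm

theorem sum_card_subtype_comm {α β : Type*} [Fintype α] [Fintype β] (r : α → β → Prop) :
    ∑ a, Nat.card {b // r a b} = ∑ b, Nat.card {a // r a b} := by
  classical
  simp only [Nat.card_eq_fintype_card, Fintype.card_subtype, Finset.card_filter]
  exact Finset.sum_comm

theorem card_fiber_inter_eq_card_inf {H K : Subgroup G} {c : G} (hc : c ∈ K) :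
    Nat.card {x : G // (x : G ⧸ H) = c ∧ x ∈ K} = Nat.card ↥(H ⊓ K) :=
  Nat.card_congr <| Equiv.subtypeEquiv (Equiv.mulLeft c⁻¹) fun x => by
    rw [eq_comm, QuotientGroup.eq, mem_inf, Equiv.coe_mulLeft, mul_mem_cancel_left (inv_mem hc)]

theorem card_fiber_inter_le_card_inf (H K : Subgroup G) (q : G ⧸ H) :
    Nat.card {x : G // (x : G ⧸ H) = q ∧ x ∈ K} ≤ Nat.card ↥(H ⊓ K) := by
  by_cases hq : ∃ c ∈ K, (c : G ⧸ H) = q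
  · obtain ⟨c, hc, rfl⟩ := hq
    exact (card_fiber_inter_eq_card_inf hc).le
  · have : IsEmpty {x : G // (x : G ⧸ H) = q ∧ x ∈ K} := ⟨fun x => hq ⟨x, x.2.2, x.2.1⟩⟩
    simp

theorem sum_card_inf_centralizer [Fintype G] (H : Subgroup G) [DecidablePred (· ∈ H)] :
    ∑ n : H, Nat.card ↥(H ⊓ centralizer {(n : G)}) = Nat.card (ConjClasses H) * Nat.card H := by
  simp only [← card_centralizer_eq_card_inf_centralizer]
  exact sum_card_centralizer H

section Fiber

open scoped Classical

variable [Fintype G] (H : Subgroup G) (q : G ⧸ H)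

theorem sum_card_inf_centralizer_fiber :
    ∑ x : {x : G // (x : G ⧸ H) = q}, Nat.card ↥(H ⊓ centralizer {(x : G)}) =
      ∑ n : H, Nat.card {x : G // (x : G ⧸ H) = q ∧ x ∈ centralizer {(n : G)}} := by
  simp only [card_inf_centralizer]
  rw [sum_card_subtype_comm]
  exact Finset.sum_congr rfl fun n _ => Nat.card_congr <|
    Equiv.subtypeSubtypeEquivSubtypeInter (fun x : G => (x : G ⧸ H) = q) (· ∈ centralizer {(n : G)})

theorem sum_card_inf_centralizer_fiber_le :
    ∑ x : {x : G // (x : G ⧸ H) = q}, Nat.card ↥(H ⊓ centralizer {(x : G)}) ≤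
      Nat.card (ConjClasses H) * Nat.card H := by
  rw [sum_card_inf_centralizer_fiber, ← sum_card_inf_centralizer]
  exact Finset.sum_le_sum fun n _ => card_fiber_inter_le_card_inf _ _ _

theorem sum_card_inf_centralizer_fiber_eq (hq : ∀ n ∈ H, ∃ c ∈ centralizer {n}, (c : G ⧸ H) = q) :
    ∑ x : {x : G // (x : G ⧸ H) = q}, Nat.card ↥(H ⊓ centralizer {(x : G)}) =
      Nat.card (ConjClasses H) * Nat.card H := by
  rw [sum_card_inf_centralizer_fiber, ← sum_card_inf_centralizer]
  refine Finset.sum_congr rfl fun n _ => ?_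
  obtain ⟨c, hc, rfl⟩ := hq n n.2
  exact card_fiber_inter_eq_card_inf hc

end Fiber

section Normal

open scoped Classical

variable [Fintype G] (N : Subgroup G) [N.Normal]

theorem sum_card_inf_centralizer_mul_card_centralizer_quotient :
    ∑ x : G, Nat.card ↥(N ⊓ centralizer {x}) * Nat.card (centralizer {(x : G ⧸ N)}) =
      ∑ q : G ⧸ N, (∑ x : {x : G // (x : G ⧸ N) = q}, Nat.card ↥(N ⊓ centralizer {(x : G)})) *
        Nat.card (centralizer {q}) := by
  rw [← Fintype.sum_fiberwise (fun x : G => (x : G ⧸ N))]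
  refine Finset.sum_congr rfl fun q _ => ?_
  rw [Finset.sum_mul]
  exact Finset.sum_congr rfl fun x _ => by rw [x.2]

theorem sum_card_centralizer_quotient_mul :
    ∑ q : G ⧸ N, Nat.card (ConjClasses N) * Nat.card N * Nat.card (centralizer {q}) =
      Nat.card (ConjClasses (G ⧸ N)) * Nat.card (ConjClasses N) * Nat.card G := by
  rw [← Finset.mul_sum, sum_card_centralizer, card_eq_card_quotient_mul_card_subgroup N]
  ring

theorem sum_card_inf_centralizer_mul_card_centralizer_quotient_le :
    ∑ x : G, Nat.card ↥(N ⊓ centralizer {x}) * Nat.card (centralizer {(x : G ⧸ N)}) ≤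
      Nat.card (ConjClasses (G ⧸ N)) * Nat.card (ConjClasses N) * Nat.card G := by
  rw [sum_card_inf_centralizer_mul_card_centralizer_quotient, ← sum_card_centralizer_quotient_mul]
  exact Finset.sum_le_sum fun q _ =>
    Nat.mul_le_mul_right _ (sum_card_inf_centralizer_fiber_le N q)

theorem sum_card_inf_centralizer_mul_card_centralizer_quotient_eq
    (hN : ∀ n ∈ N, (centralizer {n}).map (QuotientGroup.mk' N) = ⊤) :
    ∑ x : G, Nat.card ↥(N ⊓ centralizer {x}) * Nat.card (centralizer {(x : G ⧸ N)}) =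
      Nat.card (ConjClasses (G ⧸ N)) * Nat.card (ConjClasses N) * Nat.card G := by
  rw [sum_card_inf_centralizer_mul_card_centralizer_quotient, ← sum_card_centralizer_quotient_mul]
  refine Finset.sum_congr rfl fun q _ => ?_
  rw [sum_card_inf_centralizer_fiber_eq N q fun n hn => by simpa using (hN n hn).ge (mem_top q)]

end Normal

end

theorem card_conjClasses_le_mul_and_eq_iff
    (G : Type*) [Group G] [Finite G] (N : Subgroup G) [N.Normal] :
    Nat.card (ConjClasses G) ≤
        Nat.card (ConjClasses (G ⧸ N)) * Nat.card (ConjClasses N) ∧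
      (Nat.card (ConjClasses G) =
          Nat.card (ConjClasses (G ⧸ N)) * Nat.card (ConjClasses N) ↔
        ∀ g : G,
          Subgroup.centralizer {((g : G ⧸ N))} =
            (Subgroup.centralizer {g}).map (QuotientGroup.mk' N)) := by
  classical
  have := Fintype.ofFinite G
  have hsplit : Nat.card (ConjClasses G) * Nat.card G = ∑ x : G,
      Nat.card ↥(N ⊓ centralizer {x}) * Nat.card ((centralizer {x}).map (QuotientGroup.mk' N)) := by
    rw [← sum_card_centralizer]
    refine Finset.sum_congr rfl fun x _ => ?_
    rw [card_eq_card_inf_ker_mul_card_map (QuotientGroup.mk' N), QuotientGroup.ker_mk']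
  have hmap (x : G) : (centralizer {x}).map (QuotientGroup.mk' N) ≤ centralizer {(x : G ⧸ N)} := by
    simpa using map_centralizer_le_centralizer_image {x} (QuotientGroup.mk' N)
  have hle : ∑ x : G, Nat.card ↥(N ⊓ centralizer {x}) *
        Nat.card ((centralizer {x}).map (QuotientGroup.mk' N)) ≤
      ∑ x : G, Nat.card ↥(N ⊓ centralizer {x}) * Nat.card (centralizer {(x : G ⧸ N)}) :=
    Finset.sum_le_sum fun x _ => Nat.mul_le_mul_left _ (card_le_of_le (hmap x))
  have hG : 0 < Nat.card G := Nat.card_pos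
  refine ⟨Nat.le_of_mul_le_mul_right ?_ hG, fun heq => ?_, fun h => ?_⟩
  · exact hsplit ▸ hle.trans (sum_card_inf_centralizer_mul_card_centralizer_quotient_le N)
  · have hsum := le_antisymm hle <| calc
      _ ≤ _ := sum_card_inf_centralizer_mul_card_centralizer_quotient_le N
      _ = _ := by rw [← heq, hsplit]
    intro g
    have hg := (Finset.sum_eq_sum_iff_of_le fun x _ =>
      Nat.mul_le_mul_left _ (card_le_of_le (hmap x))).mp hsum g (Finset.mem_univ g)
    exact (eq_of_le_of_card_ge (hmap g) (Nat.eq_of_mul_eq_mul_left Nat.card_pos hg).ge).symm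
  · refine Nat.eq_of_mul_eq_mul_right hG ?_
    rw [hsplit, ← sum_card_inf_centralizer_mul_card_centralizer_quotient_eq N fun n hn => ?_]
    · exact Finset.sum_congr rfl fun x _ => by rw [h x]
    · rw [← h n, (QuotientGroup.eq_one_iff n).mpr hn]
      simp
end

section
/- If N is a normal subgroup of a finite group G, then d(G) ≤ d(G/N)·d(N). -/
/-!
Gallagher's counting argument. A left coset of `N` meets a subgroup `K` in either no element or
a coset of `N ⊓ K`. Taking `K = C_G(x)`, the centralizer `C_G(x)` lies over `C_{G/N}(xN)` with
fibres of size at most `|C_N(x)|`. Taking `K = C_G(n)` for `n ∈ N` and double counting,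
`∑_{x ∈ gN} |C_N(x)| = ∑_{n ∈ N} |C_G(n) ∩ gN| ≤ ∑_{n ∈ N} |C_N(n)|`, the number of commuting
pairs of `N`. Summing over `G` coset by coset bounds the commuting pairs of `G` by the product of
those of `G/N` and `N`, and `|G| = |G/N| |N|`.
-/

open Finset

theorem card_commute_pairs_eq_sum (M : Type*) [Mul M] [Fintype M] :
    Nat.card {p : M × M // Commute p.1 p.2} = ∑ x : M, Nat.card {y // Commute x y} := by
  rw [Nat.card_congr (Equiv.subtypeProdEquivSigmaSubtype fun x y : M => Commute x y),
    Nat.card_sigma]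

section

variable {G : Type*} [Group G]

theorem Subgroup.card_coset_inter_le [Finite G] (H K : Subgroup G) (a : G ⧸ H) :
    Nat.card {x : G // (x : G ⧸ H) = a ∧ x ∈ K} ≤ Nat.card {h : H // (h : G) ∈ K} := by
  rcases isEmpty_or_nonempty {x : G // (x : G ⧸ H) = a ∧ x ∈ K} with _ | ⟨⟨x₀, hx₀a, hx₀K⟩⟩
  · simp
  · refine Nat.card_le_card_of_injective
      (fun x => ⟨⟨x₀⁻¹ * x, QuotientGroup.eq.mp (hx₀a.trans x.2.1.symm)⟩,
        K.mul_mem (K.inv_mem hx₀K) x.2.2⟩) fun x y hxy => ?_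
    exact Subtype.ext (mul_left_cancel (congrArg (fun z => (z.1 : G)) hxy))

theorem Subgroup.card_coset_inter_commute_le [Finite G] (H : Subgroup G) (a : G ⧸ H)
    (z : G) :
    Nat.card {x : G // (x : G ⧸ H) = a ∧ Commute z x} ≤ Nat.card {h : H // Commute z (h : G)} := by
  simpa [Subgroup.mem_centralizer_singleton_iff, commute_iff_eq, eq_comm] using
    H.card_coset_inter_le (Subgroup.centralizer {z}) a

variable (N : Subgroup G)

theorem card_commute_le_card_commute_mk_mul [Finite G] [N.Normal] (x : G) :
    Nat.card {y : G // Commute x y} ≤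
      Nat.card {b : G ⧸ N // Commute (x : G ⧸ N) b} * Nat.card {u : N // Commute x (u : G)} := by
  classical
  have := Fintype.ofFinite G
  simp only [Nat.card_eq_fintype_card, Fintype.card_subtype]
  rw [mul_comm]
  refine card_le_mul_card_image_of_maps_to (f := QuotientGroup.mk) (fun y hy => ?_) _
    fun b _ => ?_
  · simp only [mem_filter, mem_univ, true_and] at hy ⊢
    exact hy.map (QuotientGroup.mk' N)
  · simpa [Nat.card_eq_fintype_card, Fintype.card_subtype, filter_filter, and_comm] using
      N.card_coset_inter_commute_le b x

theorem sum_card_commute_of_mk_eq_le [Fintype G] [DecidableEq (G ⧸ N)] (a : G ⧸ N) :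
    ∑ x : G with QuotientGroup.mk x = a, Nat.card {u : N // Commute x (u : G)} ≤
      Nat.card {p : N × N // Commute p.1 p.2} := by
  classical
  have fiber_le (u : N) :
      #{x : G | QuotientGroup.mk x = a ∧ Commute x (u : G)} ≤ #{v : N | Commute (u : G) v} := by
    simpa [Nat.card_eq_fintype_card, Fintype.card_subtype, Commute.symm_iff] using
      N.card_coset_inter_commute_le a u
  calc ∑ x : G with QuotientGroup.mk x = a, Nat.card {u : N // Commute x (u : G)}
      = ∑ u : N, #{x : G | QuotientGroup.mk x = a ∧ Commute x (u : G)} := by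
        simp only [Nat.card_eq_fintype_card, Fintype.card_subtype]
        exact (sum_card_bipartiteAbove_eq_sum_card_bipartiteBelow _).trans
          (by simp only [bipartiteBelow, filter_filter])
    _ ≤ ∑ u : N, #{v : N | Commute (u : G) v} := sum_le_sum fun u _ => fiber_le u
    _ = Nat.card {p : N × N // Commute p.1 p.2} := by
        rw [card_commute_pairs_eq_sum N]
        simp [Nat.card_eq_fintype_card, Fintype.card_subtype]

theorem card_commute_pairs_le_quotient_mul_subgroup [Finite G] [N.Normal] :
    Nat.card {p : G × G // Commute p.1 p.2} ≤
      Nat.card {p : (G ⧸ N) × (G ⧸ N) // Commute p.1 p.2} *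
        Nat.card {p : N × N // Commute p.1 p.2} := by
  classical
  have := Fintype.ofFinite G
  let A (b : G ⧸ N) := Nat.card {c : G ⧸ N // Commute b c}
  let B (x : G) := Nat.card {u : N // Commute x (u : G)}
  calc Nat.card {p : G × G // Commute p.1 p.2}
      = ∑ x : G, Nat.card {y // Commute x y} := card_commute_pairs_eq_sum G
    _ ≤ ∑ x : G, A x * B x := sum_le_sum fun x _ => card_commute_le_card_commute_mk_mul N x
    _ = ∑ a : G ⧸ N, A a * ∑ x : G with QuotientGroup.mk x = a, B x := by
        rw [← sum_fiberwise univ (fun x : G => (x : G ⧸ N))]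
        refine sum_congr rfl fun a _ => ?_
        rw [mul_sum]
        exact sum_congr rfl fun x hx => by rw [(mem_filter.mp hx).2]
    _ ≤ ∑ a : G ⧸ N, A a * Nat.card {p : N × N // Commute p.1 p.2} := by
        gcongr with a
        exact sum_card_commute_of_mk_eq_le N a
    _ = _ := by rw [← sum_mul, card_commute_pairs_eq_sum (G ⧸ N)]

end

theorem commProb_le_commProb_quotient_mul_commProb
    (G : Type*) [Group G] [Finite G] (N : Subgroup G) [N.Normal] :
    commProb G ≤ commProb (G ⧸ N) * commProb N := by
  rw [commProb_def, commProb_def, commProb_def, div_mul_div_comm, ← mul_pow,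
    ← Nat.cast_mul, ← Nat.cast_mul, ← N.card_eq_card_quotient_mul_card_subgroup]
  gcongr
  exact_mod_cast card_commute_pairs_le_quotient_mul_subgroup N
end

section
/- Let N be a normal subgroup of a finite group G. Then d(G) = d(G/N) if and only if N is abelian and C_{G/N}(gN) = C_G(g)N/N for every g ∈ G. -/
/-!
A pair commuting in `G` commutes modulo `N`, and each commuting pair of `G ⧸ N` lifts to exactly
`|N|²` pairs of `G`. Hence `d(G) ≤ d(G ⧸ N)`, with equality iff every pair commuting modulo `N`
commutes in `G`. Given that `N` is abelian, the centralizer condition applied to `g ∈ N` (where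
`C_{G/N}(gN)` is everything) makes `N` central, and then it is exactly what lifts commuting to `G`.
-/

open QuotientGroup Subgroup

theorem QuotientGroup.card_preimage_prodMap_mk {G H : Type*} [Group G] [Group H]
    (A : Subgroup G) (B : Subgroup H) (t : Set ((G ⧸ A) × (H ⧸ B))) :
    Nat.card (Prod.map ((↑) : G → G ⧸ A) ((↑) : H → H ⧸ B) ⁻¹' t) =
      Nat.card A * Nat.card B * Nat.card t := by
  have hprod : Nat.card (A.prod B) = Nat.card A * Nat.card B := by
    rw [Nat.card_congr (A.prodEquiv B).toEquiv, Nat.card_prod]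
  have hequiv : Nat.card (prodEquiv A B ⁻¹' t) = Nat.card t :=
    Nat.card_congr ((prodEquiv A B).image _ |>.trans
      (Equiv.setCongr ((prodEquiv A B).image_preimage t)))
  rw [← hprod, ← hequiv, ← card_preimage_mk]
  rfl

section

variable {G : Type*} [Group G] (N : Subgroup G) [N.Normal]

theorem card_commute_mk_eq :
    Nat.card {p : G × G | Commute (p.1 : G ⧸ N) p.2} =
      Nat.card N * Nat.card N * Nat.card {q : (G ⧸ N) × (G ⧸ N) // Commute q.1 q.2} :=
  card_preimage_prodMap_mk N N {q | Commute q.1 q.2}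

theorem commProb_quotient_eq_card_commute_mk_div [Finite G] :
    commProb (G ⧸ N) =
      Nat.card {p : G × G | Commute (p.1 : G ⧸ N) p.2} / (Nat.card G : ℚ) ^ 2 := by
  have : 0 < Nat.card N := Nat.card_pos
  rw [commProb_def, card_commute_mk_eq, card_eq_card_quotient_mul_card_subgroup N]
  push_cast
  field_simp

theorem commProb_eq_commProb_quotient_iff_forall_commute [Finite G] :
    commProb G = commProb (G ⧸ N) ↔ ∀ x y : G, Commute (x : G ⧸ N) y → Commute x y := by
  set S : Set (G × G) := {p | Commute p.1 p.2}
  set T : Set (G × G) := {p | Commute (p.1 : G ⧸ N) p.2}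
  have hST : S ⊆ T := fun p hp => hp.map (mk' N)
  have hG : (Nat.card G : ℚ) ^ 2 ≠ 0 := by
    have : 0 < Nat.card G := Nat.card_pos
    positivity
  calc commProb G = commProb (G ⧸ N) ↔ Nat.card S = Nat.card T := by
        rw [commProb_def, commProb_quotient_eq_card_commute_mk_div, div_left_inj' hG,
          Nat.cast_inj]
        rfl
    _ ↔ S = T := by
        rw [Nat.card_coe_set_eq, Nat.card_coe_set_eq]
        exact ⟨fun h => Set.eq_of_subset_of_ncard_le hST h.ge (Set.toFinite T),
          fun h => h ▸ rfl⟩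
    _ ↔ ∀ x y : G, Commute (x : G ⧸ N) y → Commute x y :=
        ⟨fun h x y hxy => (h.symm ▸ hxy : (x, y) ∈ S), fun h => hST.antisymm fun p => h p.1 p.2⟩

theorem map_mk'_centralizer_le (g : G) :
    (centralizer {g}).map (mk' N) ≤ centralizer {(g : G ⧸ N)} := by
  simpa using map_centralizer_le_centralizer_image {g} (mk' N)

variable {N} in
theorem le_center_of_centralizer_mk_le_map (hN : ∀ a ∈ N, ∀ b ∈ N, a * b = b * a)
    (hcent : ∀ g : G, centralizer {(g : G ⧸ N)} ≤ (centralizer {g}).map (mk' N)) :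
    N ≤ center G := by
  intro n hn
  rw [mem_center_iff]
  intro y
  have hy : (y : G ⧸ N) ∈ centralizer {(n : G ⧸ N)} := by
    simp [mem_centralizer_singleton_iff, (QuotientGroup.eq_one_iff n).2 hn]
  obtain ⟨d, hd : d ∈ centralizer {n}, hdy⟩ := hcent n hy
  have hdyn : Commute (d * (d⁻¹ * y)) n :=
    Commute.mul_left (mem_centralizer_singleton_iff.1 hd) (hN _ (QuotientGroup.eq.1 hdy) _ hn)
  rwa [mul_inv_cancel_left] at hdyn

theorem forall_commute_of_commute_mk_iff :
    (∀ x y : G, Commute (x : G ⧸ N) y → Commute x y) ↔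
      (∀ a ∈ N, ∀ b ∈ N, a * b = b * a) ∧
        ∀ g : G, centralizer {(g : G ⧸ N)} = (centralizer {g}).map (mk' N) := by
  constructor
  · intro h
    refine ⟨fun a ha b hb => h a b ?_, fun g => le_antisymm ?_ (map_mk'_centralizer_le N g)⟩
    · simp [(QuotientGroup.eq_one_iff a).2 ha]
    · intro q hq
      obtain ⟨x, rfl⟩ := mk_surjective q
      exact ⟨x, mem_centralizer_singleton_iff.2 (h x g (mem_centralizer_singleton_iff.1 hq)), rfl⟩
  · rintro ⟨hN, hcent⟩ x y hxy
    have hNc := le_center_of_centralizer_mk_le_map hN fun g => (hcent g).le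
    obtain ⟨c, hc : c ∈ centralizer {y}, hcx⟩ :=
      (hcent y).le (mem_centralizer_singleton_iff.2 hxy)
    have hcxy : Commute (c * (c⁻¹ * x)) y :=
      Commute.mul_left (mem_centralizer_singleton_iff.1 hc)
        (mem_center_iff.1 (hNc (QuotientGroup.eq.1 hcx)) y).symm
    rwa [mul_inv_cancel_left] at hcxy

end

theorem commProb_eq_commProb_quotient_iff
    (G : Type*) [Group G] [Finite G] (N : Subgroup G) [N.Normal] :
    commProb G = commProb (G ⧸ N) ↔
      (∀ a ∈ N, ∀ b ∈ N, a * b = b * a) ∧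
        ∀ g : G,
          Subgroup.centralizer {((g : G ⧸ N))} =
            (Subgroup.centralizer {g}).map (QuotientGroup.mk' N) := by
  rw [commProb_eq_commProb_quotient_iff_forall_commute, forall_commute_of_commute_mk_iff]
end

section
/- Let N be a normal subgroup of a finite group G with N ⊆ Z(G). If d(G) = d(G/N), then Z(G/N) = Z(G)/N. -/
/-!
Because `N` is central, whether `x` and `y` commute depends only on their cosets, so the commuting
pairs of `G` form the full preimage of the set `R = liftedCommutingPairs N` of pairs in `G ⧸ N`
with a commuting lift. Every fibre has `|N|²` elements, whence `d(G) = |R| / |G ⧸ N|²`, while `R`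
is contained in the commuting pairs of `G ⧸ N`. Equality of commuting probabilities thus makes `R`
all commuting pairs of `G ⧸ N`, and then any lift of a central element of `G ⧸ N` commutes with
every element of `G`.
-/

open Function

theorem Subgroup.map_center_le_center {G H : Type*} [Group G] [Group H] {f : G →* H}
    (hf : Surjective f) : (center G).map f ≤ center H := by
  rintro _ ⟨z, hz, rfl⟩
  refine mem_center_iff.mpr fun h => ?_
  obtain ⟨g, rfl⟩ := hf h
  rw [← map_mul, ← map_mul, mem_center_iff.mp hz g]

theorem MonoidHom.card_preimage_of_surjective {G H : Type*} [Group G] [Group H] (f : G →* H)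
    (hf : Surjective f) (t : Set H) :
    Nat.card (f ⁻¹' t) = Nat.card f.ker * Nat.card t := by
  let e := QuotientGroup.quotientKerEquivOfSurjective f hf
  have hpre : f ⁻¹' t = QuotientGroup.mk ⁻¹' (e ⁻¹' t) := rfl
  rw [hpre, QuotientGroup.card_preimage_mk,
    Nat.card_preimage_of_injective e.injective (by simp [e.surjective.range_eq])]

namespace QuotientGroup

variable {G : Type*} [Group G] {N : Subgroup G}

theorem commute_of_mk_eq_of_le_center (hN : N ≤ Subgroup.center G) {x y x' y' : G}
    (hx : (x : G ⧸ N) = x') (hy : (y : G ⧸ N) = y') (h : Commute x y) : Commute x' y' := by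
  have central : ∀ {n}, n ∈ N → ∀ g : G, Commute g n := fun hn g =>
    Subgroup.mem_center_iff.mp (hN hn) g
  rw [← mul_inv_cancel_left x x', ← mul_inv_cancel_left y y']
  exact (h.mul_right (central (QuotientGroup.eq.mp hy) x)).mul_left
    (central (QuotientGroup.eq.mp hx) _).symm

variable [N.Normal]

variable (N) in
def liftedCommutingPairs : Set ((G ⧸ N) × (G ⧸ N)) :=
  Prod.map mk mk '' {p : G × G | Commute p.1 p.2}

theorem liftedCommutingPairs_subset :
    liftedCommutingPairs N ⊆ {q : (G ⧸ N) × (G ⧸ N) | Commute q.1 q.2} := by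
  rintro _ ⟨⟨x, y⟩, hxy, rfl⟩
  exact hxy.map (mk' N)

theorem card_commuting_pairs_of_le_center (hN : N ≤ Subgroup.center G) :
    Nat.card {p : G × G // Commute p.1 p.2} =
      Nat.card N ^ 2 * Nat.card (liftedCommutingPairs N) := by
  let f := (mk' N).prodMap (mk' N)
  have hsat : {p : G × G | Commute p.1 p.2} = f ⁻¹' liftedCommutingPairs N := by
    ext ⟨x', y'⟩
    refine ⟨fun h => ⟨(x', y'), h, rfl⟩, ?_⟩
    rintro ⟨⟨x, y⟩, hxy, hxy'⟩
    obtain ⟨hx, hy⟩ := Prod.ext_iff.mp hxy'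
    exact commute_of_mk_eq_of_le_center hN hx hy hxy
  have hf : Surjective f := Prod.map_surjective.mpr ⟨mk'_surjective N, mk'_surjective N⟩
  rw [← Set.coe_ofPred, hsat, f.card_preimage_of_surjective hf, MonoidHom.ker_prodMap, ker_mk',
    Nat.card_congr (N.prodEquiv N).toEquiv, Nat.card_prod, sq]

theorem commProb_eq_card_liftedCommutingPairs_div [Finite G] (hN : N ≤ Subgroup.center G) :
    commProb G = Nat.card (liftedCommutingPairs N) / (Nat.card (G ⧸ N) : ℚ) ^ 2 := by
  have hN0 : (Nat.card N : ℚ) ≠ 0 := Nat.cast_ne_zero.mpr Nat.card_pos.ne'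
  rw [commProb_def, card_commuting_pairs_of_le_center hN,
    Subgroup.card_eq_card_quotient_mul_card_subgroup N]
  push_cast
  field_simp

theorem liftedCommutingPairs_eq_of_commProb_eq [Finite G] (hN : N ≤ Subgroup.center G)
    (h : commProb G = commProb (G ⧸ N)) :
    liftedCommutingPairs N = {q : (G ⧸ N) × (G ⧸ N) | Commute q.1 q.2} := by
  have hQ0 : (Nat.card (G ⧸ N) : ℚ) ≠ 0 := Nat.cast_ne_zero.mpr Nat.card_pos.ne'
  rw [commProb_eq_card_liftedCommutingPairs_div hN, commProb_def,
    div_left_inj' (pow_ne_zero 2 hQ0), Nat.cast_inj, ← Set.coe_ofPred, Nat.card_coe_set_eq,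
    Nat.card_coe_set_eq] at h
  exact Set.eq_of_subset_of_ncard_le liftedCommutingPairs_subset h.ge (Set.toFinite _)

theorem commute_of_commute_mk_of_commProb_eq [Finite G] (hN : N ≤ Subgroup.center G)
    (h : commProb G = commProb (G ⧸ N)) {x y : G} (hxy : Commute (x : G ⧸ N) y) :
    Commute x y := by
  have hlift : ((x : G ⧸ N), (y : G ⧸ N)) ∈ liftedCommutingPairs N := by
    rw [liftedCommutingPairs_eq_of_commProb_eq hN h]
    exact hxy
  obtain ⟨⟨x', y'⟩, hxy', hmk⟩ := hlift
  obtain ⟨hx, hy⟩ := Prod.ext_iff.mp hmk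
  exact commute_of_mk_eq_of_le_center hN hx hy hxy'

end QuotientGroup

theorem center_quotient_eq_of_commProb_eq
    (G : Type*) [Group G] [Finite G] (N : Subgroup G) [N.Normal]
    (hN : N ≤ Subgroup.center G) (h : commProb G = commProb (G ⧸ N)) :
    Subgroup.center (G ⧸ N) = (Subgroup.center G).map (QuotientGroup.mk' N) := by
  refine le_antisymm (fun a ha => ?_)
    (Subgroup.map_center_le_center (QuotientGroup.mk'_surjective N))
  obtain ⟨x, rfl⟩ := QuotientGroup.mk_surjective a
  refine ⟨x, Subgroup.mem_center_iff.mpr fun g => ?_, rfl⟩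
  exact (QuotientGroup.commute_of_commute_mk_of_commProb_eq hN h
    (Subgroup.mem_center_iff.mp ha g)).eq
end

section
/- For every finite group G, there exists a finite group H isoclinic to G such that |H| ≤ |G| and Z(H) ⊆ [H,H]. -/
/-!
Let `A` be the free abelian group on `G` and `E ≤ G × A` the fibre product of the abelianization
map `G → Gᵃᵇ` and the map `A → Gᵃᵇ` sending each generator `g` to its class. The first
projection `E → G` is onto and injective on `[E, E]`, which is the kernel of the second
projection `π : E → A`; so `E` is isoclinic to `G`. As a subgroup of a free abelian group of
finite rank, `π (Z(E))` is free, so `π` splits over it: `Z(E) = S ⊔ (Z(E) ⊓ [E, E])` with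
`S ⊓ [E, E] = 1`. Dividing out the central subgroup `S` keeps the isoclinism class, and the
centre of `H = E / S` is the image of `Z(E) ⊓ [E, E]`. Hence `Z(H) ≤ [H, H]`, and
`|Z(H)| ≤ |Z(G)|` because `Z(E) ⊓ [E, E]` embeds into `Z(G)`; as `H / Z(H) ≅ G / Z(G)`, this
gives `|H| ≤ |G|`.
-/

open scoped commutatorElement

/-- A finite group is supersolvable if it has a chain of subgroups, each normal in the
whole group, from the trivial subgroup to the whole group, with cyclic successive quotients. -/
def IsSupersolvable (G : Type*) [Group G] : Prop :=
  ∃ (n : ℕ) (s : Fin (n + 1) → Subgroup G) (hnorm : ∀ i, (s i).Normal),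
    s 0 = ⊥ ∧ s (Fin.last n) = ⊤ ∧ Monotone s ∧
    ∀ i : Fin n,
      IsCyclic ((s i.succ).map (@QuotientGroup.mk' G _ (s i.castSucc) (hnorm i.castSucc)))

theorem commutator_element_mem_commutator {G : Type*} [Group G] (g₁ g₂ : G) :
    ⁅g₁, g₂⁆ ∈ commutator G :=
  Subgroup.commutator_mem_commutator (Subgroup.mem_top g₁) (Subgroup.mem_top g₂)

/-- Two groups are isoclinic if there are compatible isomorphisms between their central
quotients and their commutator subgroups. -/
def Isoclinic (G H : Type*) [Group G] [Group H] : Prop :=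
  ∃ (φ : G ⧸ Subgroup.center G ≃* H ⧸ Subgroup.center H)
    (ψ : commutator G ≃* commutator H),
    ∀ (g₁ g₂ : G) (h₁ h₂ : H),
      φ (g₁ : G ⧸ Subgroup.center G) = (h₁ : H ⧸ Subgroup.center H) →
      φ (g₂ : G ⧸ Subgroup.center G) = (h₂ : H ⧸ Subgroup.center H) →
      (ψ ⟨⁅g₁, g₂⁆, commutator_element_mem_commutator g₁ g₂⟩ : H) = ⁅h₁, h₂⁆

open Subgroup

section Isoclinism

variable {G H K : Type*} [Group G] [Group H] [Group K]

theorem commutatorElement_mul_left_of_mem_center {z : G} (hz : z ∈ center G) (a c : G) :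
    ⁅a * z, c⁆ = ⁅a, c⁆ := by
  have : z * c * z⁻¹ = c := by rw [← mem_center_iff.mp hz c, mul_inv_cancel_right]
  calc ⁅a * z, c⁆ = a * (z * c * z⁻¹) * a⁻¹ * c⁻¹ := by group
    _ = ⁅a, c⁆ := by rw [this, commutatorElement_def]

theorem commutatorElement_eq_of_mk_eq_mk {a a' b b' : G}
    (ha : (a : G ⧸ center G) = a') (hb : (b : G ⧸ center G) = b') : ⁅a, b⁆ = ⁅a', b'⁆ := by
  obtain ⟨z, hz, rfl⟩ : ∃ z ∈ center G, a * z = a' :=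
    ⟨a⁻¹ * a', QuotientGroup.eq.mp ha, mul_inv_cancel_left a a'⟩
  obtain ⟨w, hw, rfl⟩ : ∃ w ∈ center G, b * w = b' :=
    ⟨b⁻¹ * b', QuotientGroup.eq.mp hb, mul_inv_cancel_left b b'⟩
  rw [commutatorElement_mul_left_of_mem_center hz, ← commutatorElement_inv (g₁ := b * w),
    commutatorElement_mul_left_of_mem_center hw, commutatorElement_inv]

theorem Isoclinic.symm (h : Isoclinic G H) : Isoclinic H G := by
  obtain ⟨φ, ψ, hψ⟩ := h
  refine ⟨φ.symm, ψ.symm, fun h₁ h₂ g₁ g₂ e₁ e₂ => ?_⟩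
  rw [MulEquiv.symm_apply_eq] at e₁ e₂
  have : ψ ⟨⁅g₁, g₂⁆, _⟩ = ⟨⁅h₁, h₂⁆, commutator_element_mem_commutator h₁ h₂⟩ :=
    Subtype.ext (hψ g₁ g₂ h₁ h₂ e₁.symm e₂.symm)
  rw [← this, MulEquiv.symm_apply_apply]

theorem Isoclinic.trans (h : Isoclinic G H) (h' : Isoclinic H K) : Isoclinic G K := by
  obtain ⟨φ, ψ, hψ⟩ := h
  obtain ⟨φ', ψ', hψ'⟩ := h'
  refine ⟨φ.trans φ', ψ.trans ψ', fun g₁ g₂ k₁ k₂ e₁ e₂ => ?_⟩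
  obtain ⟨h₁, eh₁⟩ := QuotientGroup.mk_surjective (φ g₁)
  obtain ⟨h₂, eh₂⟩ := QuotientGroup.mk_surjective (φ g₂)
  rw [MulEquiv.trans_apply, ← eh₁] at e₁
  rw [MulEquiv.trans_apply, ← eh₂] at e₂
  have : ψ ⟨⁅g₁, g₂⁆, _⟩ = ⟨⁅h₁, h₂⁆, commutator_element_mem_commutator h₁ h₂⟩ :=
    Subtype.ext (hψ g₁ g₂ h₁ h₂ eh₁.symm eh₂.symm)
  rw [MulEquiv.trans_apply, this]
  exact hψ' h₁ h₂ k₁ k₂ e₁ e₂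

theorem Isoclinic.finite [Finite G] (h : Isoclinic G H) [Finite (center H)] : Finite H := by
  obtain ⟨φ, -, -⟩ := h
  refine Nat.finite_of_card_ne_zero ?_
  rw [card_eq_card_quotient_mul_card_subgroup (center H), ← Nat.card_congr φ.toEquiv]
  exact mul_ne_zero Nat.card_pos.ne' Nat.card_pos.ne'

theorem Isoclinic.card_le (h : Isoclinic G H) (hZ : Nat.card (center H) ≤ Nat.card (center G)) :
    Nat.card H ≤ Nat.card G := by
  obtain ⟨φ, -, -⟩ := h
  rw [card_eq_card_quotient_mul_card_subgroup (center H), ← Nat.card_congr φ.toEquiv,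
    card_eq_card_quotient_mul_card_subgroup (center G)]
  exact Nat.mul_le_mul_left _ hZ

theorem map_commutator_of_surjective {p : G →* H} (hp : Function.Surjective p) :
    (commutator G).map p = commutator H := by
  rw [commutator_def, map_commutator, map_top_of_surjective p hp, commutator_def]

theorem comap_center_eq_of_disjoint_ker {p : G →* H} (hp : Function.Surjective p)
    (hdisj : Disjoint p.ker (commutator G)) : (center H).comap p = center G := by
  ext x
  refine ⟨fun hx => mem_center_iff.mpr fun y => ?_, fun hx => ?_⟩
  · rw [← commutatorElement_eq_one_iff_mul_comm]
    refine disjoint_def.mp hdisj ?_ (commutator_element_mem_commutator y x)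
    rw [MonoidHom.mem_ker, map_commutatorElement, commutatorElement_eq_one_iff_mul_comm]
    exact mem_center_iff.mp hx (p y)
  · refine mem_center_iff.mpr fun y => ?_
    obtain ⟨y, rfl⟩ := hp y
    rw [← map_mul, ← map_mul, mem_center_iff.mp hx y]

theorem isoclinic_of_surjective_of_disjoint_ker {p : G →* H} (hp : Function.Surjective p)
    (hdisj : Disjoint p.ker (commutator G)) : Isoclinic G H := by
  let f := (QuotientGroup.mk' (center H)).comp p
  have hker : center G = f.ker := by
    rw [← MonoidHom.comap_ker, QuotientGroup.ker_mk', comap_center_eq_of_disjoint_ker hp hdisj]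
  let ψ₀ := p.subgroupMap (commutator G)
  have hψ₀ : Function.Bijective ψ₀ := by
    refine ⟨(injective_iff_map_eq_one ψ₀).mpr fun x hx => Subtype.ext ?_,
      p.subgroupMap_surjective _⟩
    exact disjoint_def.mp hdisj (congrArg Subtype.val hx) x.2
  refine ⟨QuotientGroup.liftEquiv _ ((QuotientGroup.mk'_surjective _).comp hp) hker,
    (MulEquiv.ofBijective ψ₀ hψ₀).trans (MulEquiv.subgroupCongr (map_commutator_of_surjective hp)),
    fun g₁ g₂ h₁ h₂ e₁ e₂ => ?_⟩
  exact (map_commutatorElement p g₁ g₂).trans (commutatorElement_eq_of_mk_eq_mk e₁ e₂)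

theorem exists_injective_center_inf_commutator {p : G →* H} (hp : Function.Surjective p)
    (hdisj : Disjoint p.ker (commutator G)) :
    ∃ f : ↥(center G ⊓ commutator G) → center H, Function.Injective f := by
  refine ⟨fun x => ⟨p x, ?_⟩, fun x y hxy => ?_⟩
  · rw [← mem_comap, comap_center_eq_of_disjoint_ker hp hdisj]
    exact x.2.1
  · have hker : (x : G) * (y : G)⁻¹ ∈ p.ker := by
      rw [MonoidHom.mem_ker, map_mul, map_inv, mul_inv_eq_one]
      exact congrArg Subtype.val hxy
    exact Subtype.ext <| mul_inv_eq_one.mp <|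
      disjoint_def.mp hdisj hker (mul_mem x.2.2 (inv_mem y.2.2))

theorem normal_of_le_center {S : Subgroup G} (h : S ≤ center G) : S.Normal :=
  ⟨fun n hn g => by rwa [mem_center_iff.mp (h hn) g, mul_inv_cancel_right]⟩

theorem center_quotient_eq_map_center_inf_commutator {S : Subgroup G} [S.Normal]
    (hS : Disjoint S (commutator G)) (hZ : center G = S ⊔ (center G ⊓ commutator G)) :
    center (G ⧸ S) = (center G ⊓ commutator G).map (QuotientGroup.mk' S) := by
  have hmk := QuotientGroup.mk'_surjective S
  rw [← map_comap_eq_self_of_surjective hmk (center _),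
    comap_center_eq_of_disjoint_ker hmk (by rwa [QuotientGroup.ker_mk']), hZ, Subgroup.map_sup,
    QuotientGroup.map_mk'_self, bot_sup_eq, ← hZ]

end Isoclinism

theorem exists_isCompl_ker {C M : Type*} [Group C] [IsMulCommutative C] [AddCommGroup M]
    [Module.Free ℤ M] [Module.Finite ℤ M] (f : C →* Multiplicative M) :
    ∃ T : Subgroup C, IsCompl T f.ker := by
  let _ : CommGroup C := { mul_comm := mul_comm' }
  let f' := (MonoidHom.toAdditiveLeft f).toIntLinearMap
  -- `range f'` is projective: a finitely generated torsion-free `ℤ`-module is free.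
  obtain ⟨σ, hσ⟩ := Module.projective_lifting_property f'.rangeRestrict LinearMap.id
    f'.surjective_rangeRestrict
  let s : Multiplicative (LinearMap.range f') →* C := σ.toAddMonoidHom.toMultiplicativeLeft
  have hfs (p) : f (s p) = Multiplicative.ofAdd (p.toAdd : M) :=
    congrArg Subtype.val (LinearMap.congr_fun hσ p.toAdd)
  refine ⟨s.range, ?_, ?_⟩
  · rw [Subgroup.disjoint_def]
    rintro _ ⟨p, rfl⟩ hp
    rw [MonoidHom.mem_ker, hfs, ofAdd_eq_one, ZeroMemClass.coe_eq_zero, toAdd_eq_zero] at hp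
    rw [hp, map_one]
  · rw [codisjoint_iff, eq_top_iff]
    intro x _
    let p := Multiplicative.ofAdd
      (⟨f' (Additive.ofMul x), LinearMap.mem_range_self _ _⟩ : LinearMap.range f')
    refine Subgroup.mem_sup.mpr ⟨s p, ⟨p, rfl⟩, (s p)⁻¹ * x, ?_, mul_inv_cancel_left _ _⟩
    rw [MonoidHom.mem_ker, map_mul, map_inv, hfs, inv_mul_eq_one]
    rfl

theorem exists_central_complement_ker {E M : Type*} [Group E] [AddCommGroup M]
    [Module.Free ℤ M] [Module.Finite ℤ M] (π : E →* Multiplicative M) :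
    ∃ S ≤ center E, Disjoint S π.ker ∧ center E = S ⊔ (center E ⊓ π.ker) := by
  obtain ⟨T, hT⟩ := exists_isCompl_ker (π.comp (center E).subtype)
  refine ⟨T.map (center E).subtype, map_subtype_le T, ?_, ?_⟩
  · rw [disjoint_def]
    rintro _ ⟨t, ht, rfl⟩ hker
    rw [disjoint_def.mp hT.disjoint ht hker, map_one]
  · calc center E = (⊤ : Subgroup (center E)).map (center E).subtype := by
          rw [← MonoidHom.range_eq_map, range_subtype]
      _ = _ := by
          rw [← hT.sup_eq_top, Subgroup.map_sup, ← MonoidHom.comap_ker, map_comap_eq,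
            range_subtype]

section AbelianizationPullback

variable {G A : Type*} [Group G] [CommGroup A]

def abelianizationPullback (θ : A →* Abelianization G) : Subgroup (G × A) :=
  (Abelianization.of.comp (MonoidHom.fst G A)).eqLocus (θ.comp (MonoidHom.snd G A))

variable {θ : A →* Abelianization G}

theorem mem_abelianizationPullback {x : G × A} :
    x ∈ abelianizationPullback θ ↔ Abelianization.of x.1 = θ x.2 :=
  Iff.rfl

theorem abelianizationPullback_fst_surjective (hθ : Function.Surjective θ) :
    Function.Surjective ((MonoidHom.fst G A).comp (abelianizationPullback θ).subtype) := by
  intro g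
  obtain ⟨a, ha⟩ := hθ (Abelianization.of g)
  exact ⟨⟨(g, a), ha.symm⟩, rfl⟩

theorem disjoint_ker_fst_commutator_abelianizationPullback :
    Disjoint ((MonoidHom.fst G A).comp (abelianizationPullback θ).subtype).ker
      (commutator (abelianizationPullback θ)) := by
  refine Disjoint.mono_right (Abelianization.commutator_subset_ker
    ((MonoidHom.snd G A).comp (abelianizationPullback θ).subtype)) ?_
  exact disjoint_def.mpr fun h₁ h₂ => Subtype.ext (Prod.ext h₁ h₂)

theorem commutator_abelianizationPullback (hθ : Function.Surjective θ) :
    commutator (abelianizationPullback θ) =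
      ((MonoidHom.snd G A).comp (abelianizationPullback θ).subtype).ker := by
  refine le_antisymm (Abelianization.commutator_subset_ker _) fun x hx => ?_
  have hx₂ : (x : G × A).2 = 1 := hx
  have hx₁ : (x : G × A).1 ∈ commutator G := by
    rw [← Abelianization.ker_of, MonoidHom.mem_ker, mem_abelianizationPullback.mp x.2, hx₂,
      map_one]
  rw [← map_commutator_of_surjective (abelianizationPullback_fst_surjective hθ)] at hx₁
  obtain ⟨y, hy, hyx⟩ := hx₁
  have hy₂ : (y : G × A).2 = 1 := Abelianization.commutator_subset_ker
    ((MonoidHom.snd G A).comp (abelianizationPullback θ).subtype) hy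
  rwa [← Subtype.ext (Prod.ext hyx (hy₂.trans hx₂.symm))]

theorem isoclinic_abelianizationPullback (hθ : Function.Surjective θ) :
    Isoclinic (abelianizationPullback θ) G :=
  isoclinic_of_surjective_of_disjoint_ker (abelianizationPullback_fst_surjective hθ)
    disjoint_ker_fst_commutator_abelianizationPullback

end AbelianizationPullback

theorem exists_surjective_freeAbelianGroup_abelianization (G : Type*) [Group G] :
    ∃ θ : Multiplicative (FreeAbelianGroup G) →* Abelianization G, Function.Surjective θ := by
  refine ⟨(FreeAbelianGroup.lift (Additive.ofMul ∘ Abelianization.of)).toMultiplicativeLeft,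
    fun a => ?_⟩
  obtain ⟨g, rfl⟩ := QuotientGroup.mk'_surjective _ a
  exact ⟨.ofAdd (.of g), by simp; rfl⟩

theorem exists_isoclinic_stem_group (G : Type) [Group G] [Finite G] :
    ∃ (H : Type) (_ : Group H) (_ : Finite H),
      Isoclinic G H ∧ Nat.card H ≤ Nat.card G ∧
        Subgroup.center H ≤ commutator H := by
  obtain ⟨θ, hθ⟩ := exists_surjective_freeAbelianGroup_abelianization G
  set E := abelianizationPullback θ
  obtain ⟨S, hSZ, hS, hZ⟩ := exists_central_complement_ker ((MonoidHom.snd _ _).comp E.subtype)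
  rw [← commutator_abelianizationPullback hθ] at hS hZ
  have := normal_of_le_center hSZ
  have hZH := center_quotient_eq_map_center_inf_commutator hS hZ
  have hiso : Isoclinic G (E ⧸ S) := (isoclinic_abelianizationPullback hθ).symm.trans
    (isoclinic_of_surjective_of_disjoint_ker (QuotientGroup.mk'_surjective S)
      (by rwa [QuotientGroup.ker_mk']))
  obtain ⟨f, hf⟩ := exists_injective_center_inf_commutator
    (abelianizationPullback_fst_surjective hθ) disjoint_ker_fst_commutator_abelianizationPullback
  have := Finite.of_injective f hf
  have : Finite (center (E ⧸ S)) := by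
    rw [hZH]
    exact Finite.of_surjective _ ((QuotientGroup.mk' S).subgroupMap_surjective _)
  have hcard : Nat.card (center (E ⧸ S)) ≤ Nat.card (center G) := by
    rw [hZH]
    exact (Nat.le_of_dvd Nat.card_pos (card_map_dvd _ _)).trans
      (Nat.card_le_card_of_injective f hf)
  refine ⟨E ⧸ S, inferInstance, hiso.finite, hiso, hiso.card_le hcard, ?_⟩
  rw [hZH, ← map_commutator_of_surjective (QuotientGroup.mk'_surjective S)]
  exact map_mono inf_le_right
end

section
/- Let s ≥ 2 be an integer and let G be a finite group with an abelian normal nontrivial subgroup N and a subgroup H such that G = HN and H ∩ N = 1. Suppose every nontrivial orbit of the conjugation action of G on N has size at least s. Then every element of G not lying in H has conjugacy class of size at least s. -/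
open scoped Pointwise


theorem class_size_ge_of_not_mem_complement
    (s : ℕ) (hs : 2 ≤ s) (G : Type*) [Group G] [Finite G]
    (N : Subgroup G) [N.Normal] (hNab : ∀ a ∈ N, ∀ b ∈ N, a * b = b * a)
    (hN : N ≠ ⊥) (H : Subgroup G) (hHN : H ⊔ N = ⊤) (hHN' : H ⊓ N = ⊥)
    (horb : ∀ a ∈ N, a ≠ 1 → s ≤ Nat.card (conjugatesOf a)) :
    ∀ g : G, g ∉ H → s ≤ Nat.card (conjugatesOf g) := by
  intro g hg
  have hnormal : N.Normal := inferInstance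
  -- decompose g = h * a with h ∈ H, a ∈ N
  have hgmem : g ∈ (H : Set G) * (N : Set G) := by
    rw [← Subgroup.mul_normal, hHN]
    exact Subgroup.mem_top g
  obtain ⟨h, hh, a, ha, hprod⟩ := hgmem
  change h * a = g at hprod
  have hane : a ≠ 1 := by
    rintro rfl
    apply hg
    rw [← hprod, mul_one]
    exact hh
  -- uniqueness of decomposition: if u ∈ H centralizes g then it centralizes a
  have huniq : ∀ u : G, u ∈ H → u * g * u⁻¹ = g → u * a * u⁻¹ = a := by
    intro u hu hug
    have h1 : (u * h * u⁻¹) * (u * a * u⁻¹) = h * a := by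
      rw [show (u * h * u⁻¹) * (u * a * u⁻¹) = u * (h * a) * u⁻¹ by group, hprod, hug, ← hprod]
    have hxH : h⁻¹ * (u * h * u⁻¹) ∈ H :=
      H.mul_mem (H.inv_mem hh) (H.mul_mem (H.mul_mem hu hh) (H.inv_mem hu))
    have hyN : u * a * u⁻¹ ∈ N := hnormal.conj_mem a ha u
    have hxN : h⁻¹ * (u * h * u⁻¹) ∈ N := by
      have hrw : h⁻¹ * (u * h * u⁻¹) = a * (u * a * u⁻¹)⁻¹ := by
        have h1' : u * h * u⁻¹ = h * a * (u * a * u⁻¹)⁻¹ := by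
          rw [← h1]; group
        rw [h1']; group
      rw [hrw]
      exact N.mul_mem ha (N.inv_mem hyN)
    have hbot : h⁻¹ * (u * h * u⁻¹) ∈ H ⊓ N := ⟨hxH, hxN⟩
    rw [hHN', Subgroup.mem_bot] at hbot
    have hxh : u * h * u⁻¹ = h := by
      have := (inv_mul_eq_one.mp hbot)
      exact this.symm
    have : h * (u * a * u⁻¹) = h * a := by
      rw [← h1, hxh]
    exact mul_left_cancel this
  -- every conjugate of a is an H-conjugate
  have key : ∀ b : (conjugatesOf a), ∃ k : G, k ∈ H ∧ k * a * k⁻¹ = (b : G) := by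
    rintro ⟨b, hb⟩
    rw [conjugatesOf, Set.mem_setOf_eq, isConj_iff] at hb
    obtain ⟨x, hx⟩ := hb
    have hxmem : x ∈ (H : Set G) * (N : Set G) := by
      rw [← Subgroup.mul_normal, hHN]
      exact Subgroup.mem_top x
    obtain ⟨k, hk, m, hm, hkm⟩ := hxmem
    change k * m = x at hkm
    refine ⟨k, hk, ?_⟩
    have hmam : m * a * m⁻¹ = a := by
      rw [hNab m hm a ha]; group
    calc k * a * k⁻¹ = k * (m * a * m⁻¹) * k⁻¹ := by rw [hmam]
      _ = (k * m) * a * (k * m)⁻¹ := by group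
      _ = b := by rw [hkm, hx]
  choose k hkH hka using key
  have hmemg : ∀ b : (conjugatesOf a), k b * g * (k b)⁻¹ ∈ conjugatesOf g := by
    intro b
    exact isConj_iff.mpr ⟨k b, rfl⟩
  let f : (conjugatesOf a) → (conjugatesOf g) := fun b => ⟨k b * g * (k b)⁻¹, hmemg b⟩
  have hinj : Function.Injective f := by
    intro b c hbc
    have heq : k b * g * (k b)⁻¹ = k c * g * (k c)⁻¹ := congrArg Subtype.val hbc
    have huH : (k c)⁻¹ * k b ∈ H := H.mul_mem (H.inv_mem (hkH c)) (hkH b)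
    have hug : ((k c)⁻¹ * k b) * g * ((k c)⁻¹ * k b)⁻¹ = g := by
      calc ((k c)⁻¹ * k b) * g * ((k c)⁻¹ * k b)⁻¹
          = (k c)⁻¹ * (k b * g * (k b)⁻¹) * k c := by group
        _ = (k c)⁻¹ * (k c * g * (k c)⁻¹) * k c := by rw [heq]
        _ = g := by group
    have hua := huniq _ huH hug
    apply Subtype.ext
    rw [← hka b, ← hka c]
    calc k b * a * (k b)⁻¹
        = k c * (((k c)⁻¹ * k b) * a * ((k c)⁻¹ * k b)⁻¹) * (k c)⁻¹ := by group
      _ = k c * a * (k c)⁻¹ := by rw [hua]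
  calc s ≤ Nat.card (conjugatesOf a) := horb a ha hane
    _ ≤ Nat.card (conjugatesOf g) := Nat.card_le_card_of_injective f hinj
end

section
/- Let G be a finite group with trivial center Z(G) = 1 whose commutator subgroup [G,G] is isomorphic to the Klein four-group C2 × C2. If G is not supersolvable, then G is isomorphic to the alternating group A4. -/
open scoped commutatorElement

/-!
Write `V = ⁅G, G⁆ ≅ C₂ × C₂` and `C` for its centralizer. As `V` is abelian, the conjugation
actions on `V` of any two elements of `G` commute, so the elements of `V` fixed by a given `g` form
a set stable under conjugation; since `Z(G) = 1`, it is `{1}` or all of `V`. Hence an element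
`t ∉ C` permutes the three nontrivial elements of `V` cyclically, every element of `G` acts on `V`
as a power of `t`, and `G = C ⟨t⟩`. An element of `C` commuting with `t` is central, so
`h ↦ ⁅t, h⁆` embeds `C` into `V`: thus `C = V`, `t ^ 3 = 1` and `|G| = 12`. As `V` is
self-centralizing and meets `⟨t⟩` trivially, `G` acts faithfully on the four cosets of `⟨t⟩`,
with image of index two in `S₄`, namely `A₄`.
-/

open Subgroup

theorem commute_iff_mul_mul_inv_eq {G : Type*} [Group G] {g x : G} :
    Commute g x ↔ g * x * g⁻¹ = x :=
  mul_inv_eq_iff_eq_mul.symm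

theorem IsKleinFour.of_mulEquiv {H K : Type*} [Group H] [Group K] [IsKleinFour K] (e : H ≃* K) :
    IsKleinFour H where
  card_four := (Nat.card_congr e.toEquiv).trans IsKleinFour.card_four
  exponent_two := (Monoid.exponent_eq_of_mulEquiv e).trans IsKleinFour.exponent_two

namespace Subgroup

variable {G : Type*} [Group G]

theorem mul_self_eq_one_of_isKleinFour {H : Subgroup G} [IsKleinFour H] {x : G} (hx : x ∈ H) :
    x * x = 1 :=
  congrArg Subtype.val (IsKleinFour.mul_self (⟨x, hx⟩ : H))

theorem eq_one_or_eq_or_eq_or_eq_mul_of_isKleinFour {H : Subgroup G} [IsKleinFour H]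
    {x y z : G} (hx : x ∈ H) (hy : y ∈ H) (hz : z ∈ H) (hx1 : x ≠ 1) (hy1 : y ≠ 1) (hxy : x ≠ y) :
    z = 1 ∨ z = x ∨ z = y ∨ z = x * y := by
  by_contra! h
  obtain ⟨hz1, hzx, hzy, hzxy⟩ := h
  have := IsKleinFour.eq_mul_of_ne_all (x := (⟨x, hx⟩ : H)) (y := ⟨y, hy⟩) (z := ⟨z, hz⟩)
    (by simpa using hx1) (by simpa using hy1) (by simpa using hxy) (by simpa using hz1)
    (by simpa using hzx) (by simpa using hzy)
  exact hzxy (congrArg Subtype.val this)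

theorem card_eq_mul_card_of_sup_zpowers_eq_top {N : Subgroup G} [N.Normal] {t : G}
    {p : ℕ} [Fact p.Prime] (h : N ⊔ zpowers t = ⊤) (htp : t ^ p = 1) (htN : t ∉ N) :
    Nat.card G = p * Nat.card N := by
  have htop : zpowers (QuotientGroup.mk' N t) = ⊤ := by
    rw [← MonoidHom.map_zpowers, ← bot_sup_eq (map _ (zpowers t)), ← QuotientGroup.map_mk'_self N,
      ← map_sup, h, map_top_of_surjective _ (QuotientGroup.mk'_surjective N)]
  have hord : orderOf (QuotientGroup.mk' N t) = p := orderOf_eq_prime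
    (by rw [← map_pow, htp, map_one])
    (by rwa [Ne, QuotientGroup.mk'_apply, QuotientGroup.eq_one_iff])
  rw [card_eq_card_quotient_mul_card_subgroup N, ← card_top (G := G ⧸ N), ← htop, Nat.card_zpowers,
    hord]

theorem normalCore_eq_bot_of_disjoint {N H : Subgroup G} [N.Normal]
    (hN : centralizer N ≤ N) (hHN : Disjoint H N) : H.normalCore = ⊥ := by
  have hcomm : ⁅H.normalCore, N⁆ = ⊥ :=
    le_bot_iff.mp (hHN ((commutator_le_left _ _).trans (normalCore_le H)) (commutator_le_right _ _))
  exact le_bot_iff.mp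
    (hHN (normalCore_le H) ((commutator_eq_bot_iff_le_centralizer.mp hcomm).trans hN))

end Subgroup

section

variable {G : Type*} [Group G]

theorem nonempty_mulEquiv_alternatingGroup_of_injective {α : Type*} [Fintype α] [DecidableEq α]
    (f : G →* Equiv.Perm α) (hf : Function.Injective f)
    (hcard : 2 * Nat.card G = Nat.card (Equiv.Perm α)) :
    Nonempty (G ≃* alternatingGroup α) := by
  have hG : Nat.card G = Nat.card f.range := Nat.card_congr (MonoidHom.ofInjective hf).toEquiv
  have hindex : f.range.index = 2 := by
    have h := f.range.index_mul_card
    rw [← hcard, ← hG] at h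
    have : 0 < Nat.card G := by have := Nat.card_pos (α := Equiv.Perm α); omega
    exact Nat.eq_of_mul_eq_mul_right this h
  exact ⟨(MonoidHom.ofInjective hf).trans
    (MulEquiv.subgroupCongr (Equiv.Perm.eq_alternatingGroup_of_index_eq_two hindex))⟩

theorem nonempty_mulEquiv_alternatingGroup_of_normalCore_eq_bot {H : Subgroup G}
    (hH : H.normalCore = ⊥) (hG : 2 * Nat.card G = H.index.factorial) :
    Nonempty (G ≃* alternatingGroup (Fin H.index)) := by
  have hidx : H.index ≠ 0 := fun h => by rw [h, Nat.factorial_zero] at hG; omega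
  let e : G ⧸ H ≃ Fin H.index := Nat.equivFinOfCardPos hidx
  refine nonempty_mulEquiv_alternatingGroup_of_injective
    (e.permCongrHom.toMonoidHom.comp (MulAction.toPermHom G (G ⧸ H))) ?_ ?_
  · exact e.permCongrHom.injective.comp ((MonoidHom.ker_eq_bot_iff _).mp (normalCore_eq_ker H ▸ hH))
  · rw [Nat.card_perm, Nat.card_fin, hG]

theorem exists_not_commute_of_center_eq_bot (hZ : center G = ⊥) {c : G} (hc1 : c ≠ 1) :
    ∃ h, ¬Commute h c := by
  by_contra! hcen
  exact hc1 (mem_bot.mp (hZ ▸ mem_center_iff.mpr fun h => (hcen h).eq))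

theorem commute_inv_mul_of_commutatorElement_eq {t h h' : G} (e : ⁅t, h⁆ = ⁅t, h'⁆) :
    Commute t (h'⁻¹ * h) := by
  rw [commute_iff_mul_mul_inv_eq]
  simp only [commutatorElement_def] at e
  calc t * (h'⁻¹ * h) * t⁻¹ = (t * h' * t⁻¹ * h'⁻¹ * h')⁻¹ * (t * h * t⁻¹ * h⁻¹) * h := by group
    _ = h'⁻¹ * h := by rw [← e]; group

theorem conj_mem_commutator {v : G} (hv : v ∈ commutator G) (h : G) :
    h * v * h⁻¹ ∈ commutator G :=
  (inferInstance : (commutator G).Normal).conj_mem v hv h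

theorem commute_conj_of_commute [IsMulCommutative (commutator G)] {g v : G}
    (hv : v ∈ commutator G) (hgv : Commute g v) (h : G) : Commute g (h * v * h⁻¹) := by
  rw [commute_iff_mul_mul_inv_eq] at hgv ⊢
  calc g * (h * v * h⁻¹) * g⁻¹ = ⁅g, h⁆ * (h * (g * v * g⁻¹) * h⁻¹) * ⁅g, h⁆⁻¹ := by
        simp only [commutatorElement_def]; group
    _ = h * v * h⁻¹ := by
        rw [hgv, setLike_mul_comm (commutator_element_mem_commutator g h)
          (conj_mem_commutator hv h), mul_inv_cancel_right]

theorem mem_centralizer_commutator_of_commute [IsKleinFour (commutator G)]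
    (hZ : center G = ⊥) {g c : G} (hc : c ∈ commutator G) (hc1 : c ≠ 1) (hgc : Commute g c) :
    g ∈ centralizer (commutator G) := by
  have := IsKleinFour.isMulCommutative (G := commutator G)
  obtain ⟨h, hhc⟩ := exists_not_commute_of_center_eq_bot hZ hc1
  rw [commute_iff_mul_mul_inv_eq] at hhc
  have hc' : h * c * h⁻¹ ∈ commutator G := conj_mem_commutator hc h
  have hgc' : Commute g (h * c * h⁻¹) := commute_conj_of_commute hc hgc h
  refine mem_centralizer_iff.mpr fun v hv => ?_
  rcases eq_one_or_eq_or_eq_or_eq_mul_of_isKleinFour hc hc' hv hc1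
    (by rwa [Ne, conj_eq_one_iff]) (Ne.symm hhc) with rfl | rfl | rfl | rfl
  · exact (Commute.one_right g).eq.symm
  · exact hgc.eq.symm
  · exact hgc'.eq.symm
  · exact (hgc.mul_right hgc').eq.symm

theorem conj_sq_eq_mul_conj [IsKleinFour (commutator G)] {t a : G}
    (ht : ∀ v ∈ commutator G, Commute t v → v = 1) (ha : a ∈ commutator G) (ha1 : a ≠ 1) :
    t ^ 2 * a * (t ^ 2)⁻¹ = a * (t * a * t⁻¹) := by
  have := IsKleinFour.isMulCommutative (G := commutator G)
  set b := t * a * t⁻¹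
  have hb : b ∈ commutator G := conj_mem_commutator ha t
  have hb1 : b ≠ 1 := by rwa [Ne, conj_eq_one_iff]
  have hab : a ≠ b := fun h => ha1 (ht a ha (commute_iff_mul_mul_inv_eq.mpr h.symm))
  rw [show t ^ 2 * a * (t ^ 2)⁻¹ = t * b * t⁻¹ by simp only [b, pow_two]; group]
  rcases eq_one_or_eq_or_eq_or_eq_mul_of_isKleinFour ha hb (conj_mem_commutator hb t) ha1 hb1 hab
    with h | h | h | h
  · exact absurd (conj_eq_one_iff.mp h) hb1
  · -- `t` would swap `a` and `b`, hence fix `a * b ≠ 1`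
    refine absurd (mul_right_cancel (b := b) ?_) hab
    rw [mul_self_eq_one_of_isKleinFour hb]
    refine ht _ (mul_mem ha hb) (commute_iff_mul_mul_inv_eq.mpr ?_)
    calc t * (a * b) * t⁻¹ = b * (t * b * t⁻¹) := by simp only [b]; group
      _ = a * b := by rw [h, setLike_mul_comm hb ha]
  · exact absurd (ht b hb (commute_iff_mul_mul_inv_eq.mpr h)) hb1
  · exact h

theorem commute_pow_three [IsKleinFour (commutator G)] {t a : G}
    (ht : ∀ v ∈ commutator G, Commute t v → v = 1) (ha : a ∈ commutator G) (ha1 : a ≠ 1) :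
    Commute (t ^ 3) a := by
  have hb : t * a * t⁻¹ ∈ commutator G := conj_mem_commutator ha t
  have := IsKleinFour.isMulCommutative (G := commutator G)
  have hsq := conj_sq_eq_mul_conj ht ha ha1
  rw [commute_iff_mul_mul_inv_eq]
  calc t ^ 3 * a * (t ^ 3)⁻¹ = t * (t ^ 2 * a * (t ^ 2)⁻¹) * t⁻¹ := by
        simp only [pow_succ, pow_zero, one_mul]; group
    _ = t * (a * (t * a * t⁻¹)) * t⁻¹ := by rw [hsq]
    _ = (t * a * t⁻¹) * (t ^ 2 * a * (t ^ 2)⁻¹) := by simp only [pow_two]; group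
    _ = a := by
        rw [hsq, ← mul_assoc, setLike_mul_comm hb ha, mul_assoc,
          mul_self_eq_one_of_isKleinFour hb, mul_one]

theorem centralizer_commutator_sup_zpowers_eq_top [IsKleinFour (commutator G)]
    (hZ : center G = ⊥) {t a : G} (ht : ∀ v ∈ commutator G, Commute t v → v = 1)
    (ha : a ∈ commutator G) (ha1 : a ≠ 1) :
    centralizer (commutator G) ⊔ zpowers t = ⊤ := by
  have hb : t * a * t⁻¹ ∈ commutator G := conj_mem_commutator ha t
  have hb1 : t * a * t⁻¹ ≠ 1 := by rwa [Ne, conj_eq_one_iff]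
  have hab : a ≠ t * a * t⁻¹ := fun h => ha1 (ht a ha (commute_iff_mul_mul_inv_eq.mpr h.symm))
  refine eq_top_iff.mpr fun g _ => ?_
  obtain ⟨k, hk⟩ : ∃ k : ℕ, g * a * g⁻¹ = t ^ k * a * (t ^ k)⁻¹ := by
    rcases eq_one_or_eq_or_eq_or_eq_mul_of_isKleinFour ha hb (conj_mem_commutator ha g) ha1 hb1 hab
      with h | h | h | h
    · exact absurd (conj_eq_one_iff.mp h) ha1
    · exact ⟨0, by simpa using h⟩
    · exact ⟨1, by simpa using h⟩
    · exact ⟨2, by rw [h, conj_sq_eq_mul_conj ht ha ha1]⟩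
  have hmem : (t ^ k)⁻¹ * g ∈ centralizer (commutator G) := by
    refine mem_centralizer_commutator_of_commute hZ ha ha1 (commute_iff_mul_mul_inv_eq.mpr ?_)
    calc (t ^ k)⁻¹ * g * a * ((t ^ k)⁻¹ * g)⁻¹ = (t ^ k)⁻¹ * (g * a * g⁻¹) * t ^ k := by group
      _ = a := by rw [hk]; group
  rw [show g = t ^ k * ((t ^ k)⁻¹ * g) by group]
  exact mul_mem (mem_sup_right (npow_mem_zpowers t k)) (mem_sup_left hmem)

theorem mem_center_of_mem_centralizer_of_commute [IsMulCommutative (commutator G)] {t d : G}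
    (ht : ∀ v ∈ commutator G, Commute t v → v = 1) (hd : d ∈ centralizer (commutator G))
    (htd : Commute t d) : d ∈ center G := by
  refine mem_center_iff.mpr fun h => ?_
  have hx : ⁅d, h⁆ ∈ commutator G := commutator_element_mem_commutator d h
  have hz : ⁅t, h⁆ ∈ commutator G := commutator_element_mem_commutator t h
  have hdz : ⁅t, h⁆ * d = d * ⁅t, h⁆ := mem_centralizer_iff.mp hd _ hz
  have htx : Commute t ⁅d, h⁆ := by
    rw [commute_iff_mul_mul_inv_eq]
    calc t * ⁅d, h⁆ * t⁻¹ = ⁅t * d * t⁻¹, ⁅t, h⁆ * h⁆ := by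
          simp only [commutatorElement_def]; group
      _ = ⁅t, h⁆ * ⁅d, h⁆ * ⁅t, h⁆⁻¹ := by
          rw [commute_iff_mul_mul_inv_eq.mp htd, commutatorElement_def d, ← mul_assoc d, ← hdz]
          simp only [commutatorElement_def d h]; group
      _ = ⁅d, h⁆ := by rw [setLike_mul_comm hz hx, mul_inv_cancel_right]
  exact (commutatorElement_eq_one_iff_commute.mp (ht _ hx htx)).eq.symm

theorem centralizer_commutator_eq [IsKleinFour (commutator G)] (hZ : center G = ⊥) {t : G}
    (ht : ∀ v ∈ commutator G, Commute t v → v = 1) :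
    centralizer (commutator G) = commutator G := by
  have := IsKleinFour.isMulCommutative (G := commutator G)
  have hK : ∀ d ∈ centralizer (commutator G), Commute t d → d = 1 := fun d hd htd =>
    mem_bot.mp (hZ ▸ mem_center_of_mem_centralizer_of_commute ht hd htd)
  have hinj : Function.Injective fun h : centralizer (commutator G) =>
      (⟨⁅t, h.1⁆, commutator_element_mem_commutator t h.1⟩ : commutator G) := by
    rintro ⟨h, hh⟩ ⟨h', hh'⟩ e
    have := hK _ (mul_mem (inv_mem hh') hh)
      (commute_inv_mul_of_commutatorElement_eq (congrArg Subtype.val e))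
    exact Subtype.ext (inv_mul_eq_one.mp this).symm
  have := IsKleinFour.instFinite (G := commutator G)
  have : Finite (centralizer (commutator G : Set G)) := Finite.of_injective _ hinj
  exact (eq_of_le_of_card_ge (le_centralizer _) (Nat.card_le_card_of_injective _ hinj)).symm

end

theorem isomorphic_A4_of_commutator_klein_four_general
    (G : Type*) [Group G]
    (hZ : Subgroup.center G = ⊥)
    (hcomm : Nonempty
      ((commutator G) ≃* (Multiplicative (ZMod 2) × Multiplicative (ZMod 2)))) :
    Nonempty (G ≃* alternatingGroup (Fin 4)) := by
  have : IsKleinFour (commutator G) :=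
    .of_mulEquiv (hcomm.some.trans (MulEquiv.prodMultiplicative _ _).symm)
  have : Nontrivial (commutator G) := not_subsingleton_iff_nontrivial.mp fun _ =>
    IsKleinFour.not_isCyclic (G := commutator G) inferInstance
  obtain ⟨⟨a, ha⟩, ha1⟩ := exists_ne (1 : commutator G)
  replace ha1 : a ≠ 1 := by simpa using ha1
  obtain ⟨t, hta⟩ := exists_not_commute_of_center_eq_bot hZ ha1
  have ht : t ∉ centralizer (commutator G) := fun h => hta (mem_centralizer_iff.mp h a ha).symm
  have hfree : ∀ v ∈ commutator G, Commute t v → v = 1 := fun v hv htv => by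
    by_contra hv1
    exact ht (mem_centralizer_commutator_of_commute hZ hv hv1 htv)
  have hC := centralizer_commutator_eq hZ hfree
  have hsup := centralizer_commutator_sup_zpowers_eq_top hZ hfree ha ha1
  have ht3 : t ^ 3 = 1 := hfree _
    (hC ▸ mem_centralizer_commutator_of_commute hZ ha ha1 (commute_pow_three hfree ha ha1))
    (Commute.self_pow t 3)
  have hord : orderOf t = 3 := orderOf_eq_prime ht3 fun h => ht (h ▸ one_mem _)
  have hG : Nat.card G = 12 := by
    rw [card_eq_mul_card_of_sup_zpowers_eq_top (hC ▸ hsup) ht3 (hC ▸ ht), IsKleinFour.card_four]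
  have hidx : (zpowers t).index = 4 := by
    have := (zpowers t).index_mul_card
    rw [Nat.card_zpowers, hord, hG] at this
    omega
  have hcore : (zpowers t).normalCore = ⊥ := normalCore_eq_bot_of_disjoint hC.le
    (disjoint_of_coprime_natCard (by rw [Nat.card_zpowers, hord, IsKleinFour.card_four]; decide))
  have := nonempty_mulEquiv_alternatingGroup_of_normalCore_eq_bot hcore (by rw [hidx, hG]; rfl)
  rwa [hidx] at this

theorem isomorphic_A4_of_commutator_klein_four
    (G : Type*) [Group G] [Finite G]
    (hZ : Subgroup.center G = ⊥)
    (hcomm : Nonempty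
      ((commutator G) ≃* (Multiplicative (ZMod 2) × Multiplicative (ZMod 2))))
    (hss : ¬ IsSupersolvable G) :
    Nonempty (G ≃* alternatingGroup (Fin 4)) :=
  isomorphic_A4_of_commutator_klein_four_general G hZ hcomm
end

section
/- Let G be a finite group with trivial center Z(G) = 1 whose commutator subgroup [G,G] is isomorphic to C3 × C3. If G is not supersolvable, then d(G) ≤ 5/16. -/
open scoped commutatorElement

section Supersolvable

open Subgroup

variable {G : Type*} [Group G]

theorem isSupersolvable_of_closure_image_Iio (x : ℕ → G) (n : ℕ)
    (hnorm : ∀ i ≤ n, (closure (x '' Set.Iio i)).Normal)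
    (htop : closure (x '' Set.Iio n) = ⊤) : IsSupersolvable G := by
  refine ⟨n, fun i => closure (x '' Set.Iio i), fun i => hnorm i (Nat.lt_succ_iff.mp i.isLt),
    by simp, htop, fun i j hij => closure_mono (Set.image_mono (Set.Iio_subset_Iio hij)),
    fun i => ?_⟩
  have := hnorm i (Nat.le_of_lt i.isLt)
  have hstep : x '' Set.Iio (i + 1 : ℕ) = {x i} ∪ x '' Set.Iio (i : ℕ) := by
    rw [← Order.succ_eq_add_one, Order.Iio_succ_eq_insert, Set.image_insert_eq, Set.insert_eq]
  change IsCyclic (map (QuotientGroup.mk' (closure (x '' Set.Iio i)))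
    (closure (x '' Set.Iio (i + 1))))
  rw [hstep, Subgroup.closure_union, Subgroup.map_sup,
    (Subgroup.map_eq_bot_iff _).mpr (QuotientGroup.ker_mk' _).ge, sup_bot_eq,
    MonoidHom.map_closure, Set.image_singleton, ← zpowers_eq_closure]
  infer_instance

theorem isSupersolvable_of_closure_pair_eq_commutator [Finite G] {a b : G}
    (ha : (zpowers a).Normal) (hab : closure {a, b} = commutator G) : IsSupersolvable G := by
  let e := Finite.equivFin G
  -- `a`, `b`, then all of `G`: from the third term on, the subgroups generated contain
  -- `closure {a, b} = [G, G]` and so are normal.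
  let x : ℕ → G := fun
    | 0 => a
    | 1 => b
    | k + 2 => if h : k < Nat.card G then e.symm ⟨k, h⟩ else 1
  refine isSupersolvable_of_closure_image_Iio x (Nat.card G + 2) (fun i _ => ?_) ?_
  · match i with
    | 0 => simp
    | 1 =>
      have : x '' Set.Iio 1 = {a} := by simp [x]
      rwa [this, ← zpowers_eq_closure]
    | k + 2 =>
      refine .of_commutator_le _ (hab.symm.le.trans (closure_mono ?_))
      rintro _ (rfl | rfl)
      exacts [⟨0, by simp, rfl⟩, ⟨1, by simp, rfl⟩]
  · refine eq_top_iff.mpr fun g _ => subset_closure ⟨e g + 2, by simp, ?_⟩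
    simp [x, e]

theorem card_eq_prime_of_ne_bot_of_lt [Finite G] {p : ℕ} (hp : p.Prime) {L V : Subgroup G}
    (hV : Nat.card V = p ^ 2) (hbot : L ≠ ⊥) (hlt : L < V) : Nat.card L = p := by
  obtain ⟨k, hk, hcard⟩ := (Nat.dvd_prime_pow hp).mp (hV ▸ card_dvd_of_le hlt.le)
  interval_cases k
  · exact absurd (card_eq_one.mp (by simpa using hcard)) hbot
  · simpa using hcard
  · exact absurd (eq_of_le_of_card_ge hlt.le (by rw [hV, hcard])) hlt.ne

theorem isSupersolvable_of_normal_of_lt_commutator [Finite G] {p : ℕ} (hp : p.Prime)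
    (hV : Nat.card (commutator G) = p ^ 2) {L : Subgroup G} [L.Normal]
    (hbot : L ≠ ⊥) (hlt : L < commutator G) : IsSupersolvable G := by
  have hL := card_eq_prime_of_ne_bot_of_lt hp hV hbot hlt
  have : Fact p.Prime := ⟨hp⟩
  obtain ⟨a, rfl⟩ := (L.isCyclic_iff_exists_zpowers_eq_top).mp (isCyclic_of_prime_card hL)
  obtain ⟨b, hbV, hbL⟩ := SetLike.exists_of_lt hlt
  refine isSupersolvable_of_closure_pair_eq_commutator (b := b) ‹_› ?_
  have hle : closure {a, b} ≤ commutator G := by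
    rw [closure_le]
    rintro _ (rfl | rfl)
    exacts [hlt.le (mem_zpowers _), hbV]
  have hlt' : zpowers a < closure {a, b} :=
    SetLike.lt_iff_le_and_exists.mpr ⟨zpowers_le.mpr (subset_closure (by simp)),
      b, subset_closure (by simp), hbL⟩
  by_contra hne
  have hcard := card_eq_prime_of_ne_bot_of_lt hp hV (bot_le.trans_lt hlt').ne'
    (lt_of_le_of_ne hle hne)
  exact hlt'.ne (eq_of_le_of_card_ge hlt'.le (by rw [hcard, hL]))

end Supersolvable

section AbelianCommutator

open Subgroup

variable {G : Type*} [Group G] [IsMulCommutative (commutator G)]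

theorem normal_commutator_inf_centralizer (x : G) :
    (commutator G ⊓ centralizer {x}).Normal where
  conj_mem a ha g := by
    obtain ⟨haV, hax⟩ := mem_inf.mp ha
    refine mem_inf.mpr ⟨Normal.conj_mem inferInstance a haV g, ?_⟩
    have hconj : x * ⁅x⁻¹, g⁻¹⁆ = g⁻¹ * x * g := by group
    have hcomm : Commute a (g⁻¹ * x * g) := hconj ▸
      Commute.mul_right (mem_centralizer_singleton_iff.mp hax)
        (setLike_mul_comm haV (commutator_element_mem_commutator _ _))
    have := hcomm.conj g
    rw [show g * (g⁻¹ * x * g) * g⁻¹ = x by group] at this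
    exact mem_centralizer_singleton_iff.mpr this.eq

theorem commutator_inf_centralizer_eq_bot [Finite G] {p : ℕ} (hp : p.Prime)
    (hV : Nat.card (commutator G) = p ^ 2) (hss : ¬ IsSupersolvable G) {x : G}
    (hx : x ∉ centralizer (commutator G : Set G)) : commutator G ⊓ centralizer {x} = ⊥ := by
  by_contra hbot
  have := normal_commutator_inf_centralizer x
  refine hss (isSupersolvable_of_normal_of_lt_commutator hp hV hbot
    (lt_of_le_of_ne inf_le_left fun h => hx (mem_centralizer_iff.mpr fun w hw => ?_)))
  exact mem_centralizer_singleton_iff.mp (inf_le_right (b := centralizer {x}) (h ▸ hw : w ∈ _))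

theorem conj_eq_inv_of_sq_mem_centralizer {x : G} (hx : commutator G ⊓ centralizer {x} = ⊥)
    (hx2 : x ^ 2 ∈ centralizer (commutator G : Set G)) {w : G} (hw : w ∈ commutator G) :
    x * w * x⁻¹ = w⁻¹ := by
  have hxw : x * w * x⁻¹ ∈ commutator G := Normal.conj_mem inferInstance w hw x
  have hfix : x * (x * w * x⁻¹ * w) * x⁻¹ = x * w * x⁻¹ * w := by
    have h2 : x ^ 2 * w * (x ^ 2)⁻¹ = w :=
      mul_inv_eq_of_eq_mul (mem_centralizer_iff.mp hx2 w hw).symm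
    calc x * (x * w * x⁻¹ * w) * x⁻¹ = x ^ 2 * w * (x ^ 2)⁻¹ * (x * w * x⁻¹) := by
          rw [sq]; group
      _ = x * w * x⁻¹ * w := by rw [h2, setLike_mul_comm hw hxw]
  have hmem : x * w * x⁻¹ * w ∈ commutator G ⊓ centralizer {x} :=
    ⟨mul_mem hxw hw, mem_centralizer_singleton_iff.mpr (mul_inv_eq_iff_eq_mul.mp hfix).symm⟩
  rw [hx, mem_bot] at hmem
  exact eq_inv_of_mul_eq_one_left hmem

theorem three_le_index_centralizer_commutator [Finite G] (hZ : center G = ⊥) {p : ℕ}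
    (hp : p.Prime) (hV : Nat.card (commutator G) = p ^ 2) (hss : ¬ IsSupersolvable G) :
    3 ≤ (centralizer (commutator G : Set G)).index := by
  set K := centralizer (commutator G : Set G)
  have hK0 : K.index ≠ 0 := index_ne_zero_of_finite
  have hK1 : K.index ≠ 1 := by
    rw [Ne, index_eq_one, centralizer_eq_top_iff_subset, hZ]
    intro h
    rw [le_bot_iff.mp (SetLike.coe_subset_coe.mp h), card_bot] at hV
    exact (Nat.one_lt_pow two_ne_zero hp.one_lt).ne hV
  have hK2 : K.index ≠ 2 := by
    intro h2
    have hconj : ∀ g, ∀ w ∈ commutator G, g * w * g⁻¹ ∈ zpowers w := by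
      intro g w hw
      by_cases hg : g ∈ K
      · rw [← mem_centralizer_iff.mp hg w hw, mul_inv_cancel_right]
        exact mem_zpowers w
      · rw [conj_eq_inv_of_sq_mem_centralizer (commutator_inf_centralizer_eq_bot hp hV hss hg)
          (h2 ▸ K.pow_index_mem g) hw]
        exact inv_mem (mem_zpowers w)
    have : Fact p.Prime := ⟨hp⟩
    obtain ⟨w, hw⟩ := exists_prime_orderOf_dvd_card' (G := commutator G) p
      (hV ▸ dvd_pow_self p two_ne_zero)
    have : (zpowers (w : G)).Normal := ⟨fun n hn g => by
      obtain ⟨k, rfl⟩ := mem_zpowers_iff.mp hn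
      rw [← conj_zpow]
      exact zpow_mem (hconj g w w.2) k⟩
    have hcard : Nat.card (zpowers (w : G)) = p := by
      rw [Nat.card_zpowers, orderOf_submonoid, hw]
    refine hss (isSupersolvable_of_normal_of_lt_commutator hp hV (L := zpowers (w : G)) ?_ ?_)
    · intro h
      rw [h, card_bot] at hcard
      exact hp.one_lt.ne hcard
    · refine lt_of_le_of_ne (zpowers_le.mpr w.2) fun h => ?_
      rw [h, hV] at hcard
      nlinarith [hp.two_le]
  omega

end AbelianCommutator

section Counting

open Subgroup

variable {G : Type*} [Group G]

theorem card_commute_eq_sum_card_centralizer [Fintype G] :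
    Nat.card {p : G × G // Commute p.1 p.2} = ∑ y : G, Nat.card (centralizer {y}) := by
  rw [Nat.card_congr (Equiv.subtypeProdEquivSigmaSubtype Commute), Nat.card_sigma]
  exact Finset.sum_congr rfl fun y _ => Nat.card_congr
    (Equiv.subtypeEquivRight fun z => mem_centralizer_singleton_iff.trans eq_comm).symm

variable [Finite G]

theorem card_mul_card_le_of_inf_eq_bot {H K : Subgroup G} (h : H ⊓ K = ⊥) :
    Nat.card H * Nat.card K ≤ Nat.card G := by
  have hidx := index_inf_le (H := H) (K := K)
  rw [h, index_bot] at hidx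
  refine Nat.le_of_mul_le_mul_left ?_ (Nat.card_pos (α := G))
  calc Nat.card G * (Nat.card H * Nat.card K)
      ≤ H.index * K.index * (Nat.card H * Nat.card K) := Nat.mul_le_mul_right _ hidx
    _ = (Nat.card H * H.index) * (Nat.card K * K.index) := by ring
    _ = Nat.card G * Nat.card G := by rw [card_mul_index, card_mul_index]

theorem two_mul_card_centralizer_le (hZ : center G = ⊥) {y : G} (hy : y ≠ 1) :
    2 * Nat.card (centralizer {y}) ≤ Nat.card G := by
  have hne : centralizer {y} ≠ ⊤ := by
    rwa [Ne, centralizer_eq_top_iff_subset, Set.singleton_subset_iff, hZ, SetLike.mem_coe,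
      mem_bot]
  calc 2 * Nat.card (centralizer {y}) ≤ (centralizer {y}).index * Nat.card (centralizer {y}) :=
        Nat.mul_le_mul_right _ (one_lt_index_of_ne_top hne)
    _ = Nat.card G := index_mul_card _

/-- The bound is `|G|` at `y = 1`, `|G| / 2` on the rest of `K` and `|G| / |H|` off `K`, written
so that it sums directly over `G`. -/
theorem card_centralizer_le_of_inf_centralizer_eq_bot (hZ : center G = ⊥) (H K : Subgroup G)
    (hHK : ∀ y ∉ K, H ⊓ centralizer {y} = ⊥) (y : G) [Decidable (y ∈ K)] [Decidable (y = 1)] :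
    (Nat.card (centralizer {y}) : ℚ) ≤ (Nat.card G : ℚ) / Nat.card H +
      (if y ∈ K then (Nat.card G : ℚ) / 2 - Nat.card G / Nat.card H else 0) +
      (if y = 1 then (Nat.card G : ℚ) / 2 else 0) := by
  by_cases hyK : y ∈ K
  · by_cases hy1 : y = 1
    · have : (Nat.card (centralizer {y}) : ℚ) ≤ Nat.card G := by
        exact_mod_cast card_le_card_group _
      rw [if_pos hyK, if_pos hy1]
      linarith
    · have : (2 * Nat.card (centralizer {y}) : ℚ) ≤ Nat.card G := by
        exact_mod_cast two_mul_card_centralizer_le hZ hy1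
      rw [if_pos hyK, if_neg hy1]
      linarith
  · have hy1 : y ≠ 1 := fun h1 => hyK (h1 ▸ one_mem K)
    rw [if_neg hyK, if_neg hy1, add_zero, add_zero, le_div_iff₀ (Nat.cast_pos.mpr Nat.card_pos),
      mul_comm]
    exact_mod_cast card_mul_card_le_of_inf_eq_bot (hHK y hyK)

theorem commProb_le_of_inf_centralizer_eq_bot (hZ : center G = ⊥) (H K : Subgroup G)
    (hHK : ∀ y ∉ K, H ⊓ centralizer {y} = ⊥) :
    commProb G ≤
      (Nat.card G : ℚ)⁻¹ / 2 + (K.index : ℚ)⁻¹ / 2 + (1 - (K.index : ℚ)⁻¹) / Nat.card H := by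
  classical
  have := Fintype.ofFinite G
  have hsum := Finset.sum_le_sum fun y (_ : y ∈ Finset.univ) =>
    card_centralizer_le_of_inf_centralizer_eq_bot hZ H K hHK y
  simp only [Finset.sum_add_distrib, Finset.sum_ite, Finset.sum_const_zero, add_zero,
    Finset.sum_const, Finset.card_univ, nsmul_eq_mul, ← Fintype.card_subtype,
    ← Nat.card_eq_fintype_card, Nat.card_unique, Nat.cast_one, one_mul] at hsum
  have hKi : (Nat.card K : ℚ) * K.index = Nat.card G := by exact_mod_cast card_mul_index K
  have hi : (K.index : ℚ) ≠ 0 := Nat.cast_ne_zero.mpr index_ne_zero_of_finite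
  rw [commProb_def, card_commute_eq_sum_card_centralizer, Nat.cast_sum,
    div_le_iff₀ (pow_pos (Nat.cast_pos.mpr Nat.card_pos) 2)]
  refine hsum.trans_eq ?_
  rw [← hKi]
  field_simp
  ring

end Counting

theorem commProb_le_of_commutator_C3xC3
    (G : Type*) [Group G] [Finite G]
    (hZ : Subgroup.center G = ⊥)
    (hcomm : Nonempty
      ((commutator G) ≃* (Multiplicative (ZMod 3) × Multiplicative (ZMod 3))))
    (hss : ¬ IsSupersolvable G) :
    commProb G ≤ 5 / 16 := by
  obtain ⟨e⟩ := hcomm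
  have hV : Nat.card (commutator G) = 3 ^ 2 := by
    rw [Nat.card_congr e.toEquiv]
    simp
  have : IsMulCommutative (commutator G) :=
    isMulCommutative_iff.mpr fun a b => e.injective (by simp only [map_mul, mul_comm])
  set K := Subgroup.centralizer (commutator G : Set G)
  have hbound := commProb_le_of_inf_centralizer_eq_bot hZ (commutator G) K
    fun y hy => commutator_inf_centralizer_eq_bot Nat.prime_three hV hss hy
  have hi : (K.index : ℚ)⁻¹ ≤ 3⁻¹ := by
    gcongr
    exact_mod_cast three_le_index_centralizer_commutator hZ Nat.prime_three hV hss
  have hn : (Nat.card G : ℚ)⁻¹ ≤ 9⁻¹ := by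
    gcongr
    exact_mod_cast hV ▸ Subgroup.card_le_card_group (commutator G)
  rw [hV] at hbound
  push_cast at hbound
  linarith
end

section
/- Let G be a finite group with an abelian normal subgroup N isomorphic to C2 × C2 that has a complement H in G (so G = N ⋊ H), and assume d(G) > 1/3. Then there exists a nontrivial element of N that is fixed by the conjugation action of every element of H; in particular, the center Z(G) is nontrivial. -/
/-!
Write `C_N(x) = N ⊓ centralizer {x}`; as `N` is abelian, it only depends on the coset `N x`.
Among the pairs in `N x × N y` at most `|N| · min(|C_N(x)|, |C_N(y)|)` commute, and as soon as one
pair there commutes this minimum is at most `|C_N(x) ⊓ C_N(y)|`: if `C_N(x)` has order 2, then `y`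
normalizes it and hence centralizes it. Summing over all cosets,
`|N|² · #{commuting pairs} ≤ |N| · ∑_{a ∈ N} |C_G(a)|²`. When no nontrivial element of `N` is
central, every conjugacy class inside `N \ {1}` has at least two elements, so `N \ {1}` is a single
class of size 3; hence the sum is `|G|² + 3 (|G| / 3)² = 4 |G|² / 3` and `d(G) ≤ 1/3`.
-/

open Subgroup

section

variable {G : Type*} [Group G] {N : Subgroup G}

theorem mem_centralizer_singleton_comm {a b : G} :
    a ∈ centralizer {b} ↔ b ∈ centralizer {a} := by
  rw [mem_centralizer_singleton_iff, mem_centralizer_singleton_iff, eq_comm]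

theorem inf_centralizer_mul_left [IsMulCommutative N] {a : G} (ha : a ∈ N) (x : G) :
    N ⊓ centralizer {a * x} = N ⊓ centralizer {x} := by
  ext b
  simp only [mem_inf, mem_centralizer_singleton_iff, and_congr_right_iff]
  intro hb
  rw [← mul_assoc, setLike_mul_comm hb ha, mul_assoc, mul_assoc, mul_right_inj]

theorem inf_centralizer_le_centralizer_of_card_eq_two [N.Normal] {x y : G} (hxy : Commute x y)
    (h2 : Nat.card ↥(N ⊓ centralizer {x}) = 2) : N ⊓ centralizer {x} ≤ centralizer {y} := by
  obtain ⟨w, -, hw⟩ := (Nat.card_eq_two_iff' (1 : ↥(N ⊓ centralizer {x}))).1 h2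
  intro z hz
  obtain ⟨hzN, hzx⟩ := mem_inf.1 hz
  by_cases hz1 : z = 1
  · rw [hz1]
    exact one_mem _
  have hzx' : Commute z x := mem_centralizer_singleton_iff.1 hzx
  have hconj : y * z * y⁻¹ ∈ N ⊓ centralizer {x} :=
    mem_inf.2 ⟨‹N.Normal›.conj_mem z hzN y, mem_centralizer_singleton_iff.2
      ((hxy.symm.mul_left hzx').mul_left hxy.symm.inv_left).eq⟩
  have hconj1 : (⟨y * z * y⁻¹, hconj⟩ : ↥(N ⊓ centralizer {x})) ≠ 1 := by
    simpa [Subtype.ext_iff] using hz1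
  have hz1' : (⟨z, hz⟩ : ↥(N ⊓ centralizer {x})) ≠ 1 := by
    simpa [Subtype.ext_iff] using hz1
  have hyz : y * z * y⁻¹ = z := congrArg Subtype.val ((hw _ hconj1).trans (hw _ hz1').symm)
  rw [mul_inv_eq_iff_eq_mul] at hyz
  exact mem_centralizer_singleton_iff.2 hyz.symm

theorem card_centralizer_mul_ncard_orbit (a : G) :
    Nat.card (centralizer {a}) * (MulAction.orbit (ConjAct G) a).ncard = Nat.card G := by
  rw [nat_card_centralizer_nat_card_stabilizer, ← MulAction.index_stabilizer, card_mul_index]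
  rfl

theorem ncard_coe_diff_one (hN4 : Nat.card N = 4) : ((N : Set G) \ {1}).ncard = 3 := by
  rw [Set.ncard_sdiff_singleton_of_mem (one_mem N), ← Nat.card_coe_set_eq, SetLike.coe_sort_coe,
    hN4]

theorem orbit_conjAct_subset_diff_one [N.Normal] {a : G} (ha : a ∈ N) (ha1 : a ≠ 1) :
    MulAction.orbit (ConjAct G) a ⊆ (N : Set G) \ {1} := by
  intro b hb
  obtain ⟨c, rfl⟩ := isConj_iff.1 (isConj_comm.1 (ConjAct.mem_orbit_conjAct.1 hb))
  exact ⟨‹N.Normal›.conj_mem a ha c, by simpa using ha1⟩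

theorem sum_card_commute_mul [Fintype G] [Fintype N] :
    ∑ q : G × G, Nat.card {p : N × N // Commute (p.1 * q.1) (p.2 * q.2)} =
      Nat.card N ^ 2 * Nat.card {q : G × G // Commute q.1 q.2} := by
  let translate : (G × G) × (N × N) ≃ (N × N) × (G × G) :=
    { toFun := fun z => (z.2, (z.2.1 * z.1.1, z.2.2 * z.1.2))
      invFun := fun w => ((w.1.1⁻¹ * w.2.1, w.1.2⁻¹ * w.2.2), w.1)
      left_inv := fun z => by simp
      right_inv := fun w => by simp }
  have translateCommute := Equiv.subtypeEquiv translate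
    (p := fun z => Commute ((z.2.1 : G) * z.1.1) ((z.2.2 : G) * z.1.2))
    (q := fun w => Commute w.2.1 w.2.2) fun _ => Iff.rfl
  rw [← Nat.card_sigma, ← Nat.card_congr (Equiv.subtypeProdEquivSigmaSubtype
    fun (q : G × G) (p : N × N) => Commute (p.1 * q.1) (p.2 * q.2)),
    Nat.card_congr translateCommute,
    Nat.card_congr (Equiv.subtypeProdEquivSigmaSubtype
      fun (_ : N × N) (q : G × G) => Commute q.1 q.2), Nat.card_sigma]
  simp [Nat.card_eq_fintype_card, sq]

theorem sum_card_inf_centralizer_s17 [Fintype G] [Fintype N] :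
    ∑ q : G × G, Nat.card ↥(N ⊓ centralizer {q.1} ⊓ centralizer {q.2}) =
      ∑ a : N, Nat.card (centralizer {(a : G)}) ^ 2 := by
  let swap : (Σ q : G × G, ↥(N ⊓ centralizer {q.1} ⊓ centralizer {q.2})) ≃
      Σ a : N, ↥(centralizer {(a : G)}) × ↥(centralizer {(a : G)}) :=
    { toFun := fun z => ⟨⟨z.2, z.2.2.1.1⟩, (⟨z.1.1, mem_centralizer_singleton_comm.1 z.2.2.1.2⟩,
        ⟨z.1.2, mem_centralizer_singleton_comm.1 z.2.2.2⟩)⟩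
      invFun := fun w => ⟨(w.2.1, w.2.2), ⟨w.1, ⟨w.1.2, mem_centralizer_singleton_comm.1 w.2.1.2⟩,
        mem_centralizer_singleton_comm.1 w.2.2.2⟩⟩
      left_inv := fun z => rfl
      right_inv := fun w => rfl }
  rw [← Nat.card_sigma, Nat.card_congr swap, Nat.card_sigma]
  simp [Nat.card_prod, sq]

variable [Finite G]

theorem card_commute_mul_right_le (z y : G) :
    Nat.card {b : N // Commute z (b * y)} ≤ Nat.card ↥(N ⊓ centralizer {z}) := by
  rcases isEmpty_or_nonempty {b : N // Commute z (b * y)} with h | ⟨⟨b₀, hb₀⟩⟩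
  · simp
  · refine Nat.card_le_card_of_injective
      (fun b => ⟨b.1 * b₀⁻¹, mem_inf.2 ⟨mul_mem b.1.2 (inv_mem b₀.2), ?_⟩⟩) fun b b' h => ?_
    · have hcomm : Commute z ((b.1 * y) * ((b₀ : G) * y)⁻¹) := b.2.mul_right hb₀.inv_right
      rw [mul_inv_rev, ← mul_assoc, mul_inv_cancel_right] at hcomm
      exact mem_centralizer_singleton_iff.2 hcomm.symm.eq
    · exact Subtype.ext (Subtype.ext (mul_right_cancel (congrArg Subtype.val h)))

theorem card_commute_mul_le_left [IsMulCommutative N] (x y : G) :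
    Nat.card {p : N × N // Commute (p.1 * x) (p.2 * y)} ≤
      Nat.card N * Nat.card ↥(N ⊓ centralizer {x}) := by
  have := Fintype.ofFinite N
  rw [Nat.card_congr (Equiv.subtypeProdEquivSigmaSubtype fun a b : N => Commute (a * x) (b * y)),
    Nat.card_sigma]
  calc ∑ a : N, Nat.card {b : N // Commute (a * x) (b * y)}
      ≤ ∑ a : N, Nat.card ↥(N ⊓ centralizer {(a : G) * x}) :=
        Finset.sum_le_sum fun a _ => card_commute_mul_right_le _ _
    _ = Nat.card N * Nat.card ↥(N ⊓ centralizer {x}) := by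
        simp [inf_centralizer_mul_left (SetLike.coe_mem _), Nat.card_eq_fintype_card]

theorem card_commute_mul_le_right [IsMulCommutative N] (x y : G) :
    Nat.card {p : N × N // Commute (p.1 * x) (p.2 * y)} ≤
      Nat.card N * Nat.card ↥(N ⊓ centralizer {y}) := by
  rw [Nat.card_congr (Equiv.subtypeEquiv (Equiv.prodComm N N)
    (p := fun p => Commute (p.1 * x) (p.2 * y)) (q := fun p => Commute (p.1 * y) (p.2 * x))
    fun _ => Commute.symm_iff)]
  exact card_commute_mul_le_left y x

theorem min_card_le_card_inf_centralizer [N.Normal] (hN4 : Nat.card N = 4) {x y : G}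
    (hxy : Commute x y) :
    min (Nat.card ↥(N ⊓ centralizer {x})) (Nat.card ↥(N ⊓ centralizer {y})) ≤
      Nat.card ↥(N ⊓ centralizer {x} ⊓ centralizer {y}) := by
  have hdvd : Nat.card ↥(N ⊓ centralizer {x}) ∣ 4 := hN4 ▸ card_dvd_of_le inf_le_left
  have hpos : 0 < Nat.card ↥(N ⊓ centralizer {x}) := Nat.card_pos
  have hle : Nat.card ↥(N ⊓ centralizer {x}) ≤ 4 := Nat.le_of_dvd (by norm_num) hdvd
  interval_cases h : Nat.card ↥(N ⊓ centralizer {x})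
  · exact (min_le_left 1 _).trans Nat.card_pos
  · rw [inf_eq_left.2 (inf_centralizer_le_centralizer_of_card_eq_two hxy h), h]
    exact min_le_left _ _
  · norm_num at hdvd
  · have hxN : N ⊓ centralizer {x} = N := eq_of_le_of_card_ge inf_le_left (by rw [h, hN4])
    rw [hxN]
    exact min_le_right _ _

theorem card_commute_mul_le [N.Normal] (hN4 : Nat.card N = 4) (x y : G) :
    Nat.card {p : N × N // Commute (p.1 * x) (p.2 * y)} ≤
      Nat.card N * Nat.card ↥(N ⊓ centralizer {x} ⊓ centralizer {y}) := by
  have : IsMulCommutative N :=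
    IsPGroup.isMulCommutative_of_card_eq_prime_sq (p := 2) (by rw [hN4]; rfl)
  rcases isEmpty_or_nonempty {p : N × N // Commute (p.1 * x) (p.2 * y)} with h | ⟨⟨⟨a, b⟩, hab⟩⟩
  · simp
  · have key := min_card_le_card_inf_centralizer hN4 hab
    have hby : N ⊓ centralizer {x} ⊓ centralizer {(b : G) * y} =
        N ⊓ centralizer {x} ⊓ centralizer {y} := by
      rw [inf_right_comm, inf_centralizer_mul_left b.2, inf_right_comm]
    rw [inf_centralizer_mul_left a.2, inf_centralizer_mul_left b.2, hby] at key
    calc Nat.card {p : N × N // Commute (p.1 * x) (p.2 * y)}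
        ≤ Nat.card N *
            min (Nat.card ↥(N ⊓ centralizer {x})) (Nat.card ↥(N ⊓ centralizer {y})) := by
          rw [← min_mul_mul_left]
          exact le_min (card_commute_mul_le_left x y) (card_commute_mul_le_right x y)
      _ ≤ Nat.card N * Nat.card ↥(N ⊓ centralizer {x} ⊓ centralizer {y}) :=
          Nat.mul_le_mul_left _ key

theorem one_lt_ncard_orbit_conjAct {a : G} (ha : a ∉ center G) :
    1 < (MulAction.orbit (ConjAct G) a).ncard := by
  obtain ⟨g, hg⟩ : ∃ g : G, g * a ≠ a * g := by simpa [mem_center_iff] using ha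
  rw [Set.one_lt_ncard_iff_nontrivial]
  refine ⟨a, MulAction.mem_orbit_self a, ConjAct.toConjAct g • a, MulAction.mem_orbit _ _, ?_⟩
  rw [ConjAct.smul_def, ConjAct.ofConjAct_toConjAct, ne_comm, Ne, mul_inv_eq_iff_eq_mul]
  exact hg

theorem orbit_conjAct_eq_diff_one [N.Normal] (hN4 : Nat.card N = 4) (hZ : N ⊓ center G = ⊥)
    {a : G} (ha : a ∈ N) (ha1 : a ≠ 1) :
    MulAction.orbit (ConjAct G) a = (N : Set G) \ {1} := by
  have hnc : ∀ b ∈ (N : Set G) \ {1}, b ∉ center G := fun b hb hbZ =>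
    hb.2 (by simpa [hZ] using (mem_inf.2 ⟨hb.1, hbZ⟩ : b ∈ N ⊓ center G))
  refine (orbit_conjAct_subset_diff_one ha ha1).antisymm fun b hb => ?_
  by_contra hba
  have hdisj : Disjoint (MulAction.orbit (ConjAct G) a) (MulAction.orbit (ConjAct G) b) :=
    Set.disjoint_left.2 fun c hca hcb => hba (MulAction.orbit_eq_iff.1
      ((MulAction.orbit_eq_iff.2 hcb).symm.trans (MulAction.orbit_eq_iff.2 hca)))
  have hsub := Set.ncard_le_ncard (Set.union_subset (orbit_conjAct_subset_diff_one ha ha1)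
    (orbit_conjAct_subset_diff_one hb.1 hb.2))
  rw [Set.ncard_union_eq hdisj, ncard_coe_diff_one hN4] at hsub
  have := one_lt_ncard_orbit_conjAct (hnc a ⟨ha, ha1⟩)
  have := one_lt_ncard_orbit_conjAct (hnc b hb)
  omega

theorem three_mul_card_centralizer [N.Normal] (hN4 : Nat.card N = 4) (hZ : N ⊓ center G = ⊥)
    {a : G} (ha : a ∈ N) (ha1 : a ≠ 1) : 3 * Nat.card (centralizer {a}) = Nat.card G := by
  rw [← card_centralizer_mul_ncard_orbit a, orbit_conjAct_eq_diff_one hN4 hZ ha ha1,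
    ncard_coe_diff_one hN4, mul_comm]

theorem three_mul_sum_card_centralizer_sq [Fintype N] [N.Normal] (hN4 : Nat.card N = 4)
    (hZ : N ⊓ center G = ⊥) :
    3 * ∑ a : N, Nat.card (centralizer {(a : G)}) ^ 2 = 4 * Nat.card G ^ 2 := by
  classical
  have hrest : 9 * ∑ a ∈ ({1}ᶜ : Finset N), Nat.card (centralizer {(a : G)}) ^ 2 =
      3 * Nat.card G ^ 2 := by
    rw [Finset.mul_sum, Finset.sum_congr rfl fun a ha => ?_, Finset.sum_const, Finset.card_compl,
      ← Nat.card_eq_fintype_card, hN4, Finset.card_singleton, smul_eq_mul]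
    rw [← three_mul_card_centralizer hN4 hZ a.2 (by simpa using ha)]
    ring
  have hone : Nat.card (centralizer {((1 : N) : G)}) = Nat.card G := by
    rw [coe_one, centralizer_eq_top_iff_subset.2 (Set.singleton_subset_iff.2 (one_mem _)),
      card_top]
  rw [Fintype.sum_eq_add_sum_compl 1, hone]
  omega

theorem commProb_le_one_third [N.Normal] (hN4 : Nat.card N = 4) (hZ : N ⊓ center G = ⊥) :
    commProb G ≤ 1 / 3 := by
  classical
  have := Fintype.ofFinite G
  have hcount : 3 * Nat.card {q : G × G // Commute q.1 q.2} ≤ Nat.card G ^ 2 := by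
    have hle : ∑ q : G × G, Nat.card {p : N × N // Commute (p.1 * q.1) (p.2 * q.2)} ≤
        Nat.card N * ∑ a : N, Nat.card (centralizer {(a : G)}) ^ 2 := by
      rw [← sum_card_inf_centralizer_s17, Finset.mul_sum]
      exact Finset.sum_le_sum fun q _ => card_commute_mul_le hN4 q.1 q.2
    rw [sum_card_commute_mul, hN4] at hle
    have := three_mul_sum_card_centralizer_sq hN4 hZ
    omega
  rw [commProb_def, div_le_iff₀ (pow_pos (Nat.cast_pos.2 Nat.card_pos) 2)]
  have : (3 : ℚ) * Nat.card {q : G × G // Commute q.1 q.2} ≤ Nat.card G ^ 2 := by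
    exact_mod_cast hcount
  linarith

end

theorem exists_fixed_element_of_klein_four_complemented_general
    (G : Type*) [Group G] [Finite G]
    (N : Subgroup G) [N.Normal]
    (hNiso : Nonempty (N ≃* (Multiplicative (ZMod 2) × Multiplicative (ZMod 2))))
    (H : Subgroup G)
    (hd : commProb G > 1 / 3) :
    (∃ a ∈ N, a ≠ 1 ∧ ∀ h ∈ H, h * a * h⁻¹ = a) ∧
      Subgroup.center G ≠ ⊥ := by
  obtain ⟨e⟩ := hNiso
  have hN4 : Nat.card N = 4 := by
    rw [Nat.card_congr e.toEquiv, Nat.card_eq_fintype_card]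
    rfl
  obtain ⟨⟨a, haN, haZ⟩, ha1⟩ := ne_bot_iff_exists_ne_one.1 fun hZ =>
    (commProb_le_one_third hN4 hZ).not_gt hd
  have ha1 : a ≠ 1 := fun h => ha1 (Subtype.ext h)
  refine ⟨⟨a, haN, ha1, fun h _ => ?_⟩, ne_bot_iff_exists_ne_one.2 ⟨⟨a, haZ⟩, ?_⟩⟩
  · rw [mem_center_iff.1 haZ h, mul_inv_cancel_right]
  · exact fun h => ha1 (congrArg Subtype.val h)

theorem exists_fixed_element_of_klein_four_complemented
    (G : Type*) [Group G] [Finite G]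
    (N : Subgroup G) [N.Normal]
    (hNiso : Nonempty (N ≃* (Multiplicative (ZMod 2) × Multiplicative (ZMod 2))))
    (H : Subgroup G) (hHN : H ⊔ N = ⊤) (hHN' : H ⊓ N = ⊥)
    (hd : commProb G > 1 / 3) :
    (∃ a ∈ N, a ≠ 1 ∧ ∀ h ∈ H, h * a * h⁻¹ = a) ∧
      Subgroup.center G ≠ ⊥ :=
  exists_fixed_element_of_klein_four_complemented_general G N hNiso H hd
end
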